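/- arXiv:2510.02021 — 6 statements merged into one kernel-verified Lean document; each statement's English description precedes it below -/
import Mathlib

section
/- Let B, U, I, D be positive integers with B ≥ U + I. Let H ∈ ℂ^{B×U} and J ∈ ℂ^{B×I} be such that the B×(U+I) matrix [H, J] has rank U + I. Let S_D ∈ S^{U×D}, W_D ∈ ℂ^{I×D}, and set Y_D = H S_D + J W_D (i.e., zero thermal noise). If the jammer is not eclipsed (perfect-CSI sense), then for every P ∈ 𝒢_{B−I}(ℂ^B) and every S̃ ∈ S^{U×D}, one has P (Y_D − H S̃) = 0 if and only if S̃ = S_D and P is the orthogonal projection onto the orthogonal complement of the column space of J. In particular, the minimization of ‖P (Y_D − H S̃)‖_F over (S̃, P) ∈ S^{U×D} × 𝒢_{B−I}(ℂ^B) has minimum value 0, attained at this unique point. -/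
open scoped BigOperators
open scoped Classical

noncomputable section

/-- The QPSK constellation `{(1+i)/√2, (1−i)/√2, (−1+i)/√2, (−1−i)/√2}`. -/
def QPSK : Finset ℂ :=
  {(1 + Complex.I) / (Real.sqrt 2 : ℂ), (1 - Complex.I) / (Real.sqrt 2 : ℂ),
   (-1 + Complex.I) / (Real.sqrt 2 : ℂ), (-1 - Complex.I) / (Real.sqrt 2 : ℂ)}

/-- The finite set of `U × D` matrices with all entries in the QPSK constellation. -/
def qpskMatrices (U D : ℕ) : Finset (Matrix (Fin U) (Fin D) ℂ) :=
  Fintype.piFinset fun _ : Fin U => Fintype.piFinset fun _ : Fin D => QPSK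

/-- Probability of an event under the uniform distribution on `S^{U×D}`. -/
def probM (U D : ℕ) (P : Matrix (Fin U) (Fin D) ℂ → Prop) : ℝ :=
  (((qpskMatrices U D).filter P).card : ℝ) / ((qpskMatrices U D).card : ℝ)

/-- The finite set of vectors in `S^D`. -/
def qpskVecs (D : ℕ) : Finset (Fin D → ℂ) := Fintype.piFinset fun _ : Fin D => QPSK

/-- The ℓ₀-"norm": number of nonzero entries. -/
def zeroNorm {D : ℕ} (w : Fin D → ℂ) : ℕ := (Finset.univ.filter fun k => w k ≠ 0).card

/-- Two vectors are collinear if stacking them gives a matrix of rank at most 1. -/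
def Collinear2 {D : ℕ} (x y : Fin D → ℂ) : Prop :=
  (Matrix.of ![x, y]).rank ≤ 1

/-- `qProb D w`: probability, for `s` uniform on `S^D`, that some `s̃ ∈ S^D`, `s̃ ≠ s`,
has `s̃ − s` collinear with `w`. -/
def qProb (D : ℕ) (w : Fin D → ℂ) : ℝ :=
  (((qpskVecs D).filter fun s => ∃ st : Fin D → ℂ, (∀ k, st k ∈ QPSK) ∧ st ≠ s ∧
      Collinear2 (st - s) w).card : ℝ) / ((qpskVecs D).card : ℝ)

/-- Eclipsing in the perfect-CSI sense. -/
def EclipsedCSI {U I D : ℕ} (S_D : Matrix (Fin U) (Fin D) ℂ)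
    (W_D : Matrix (Fin I) (Fin D) ℂ) : Prop :=
  ∃ St : Matrix (Fin U) (Fin D) ℂ, (∀ i j, St i j ∈ QPSK) ∧ St ≠ S_D ∧
    (Matrix.fromRows (S_D - St) W_D).rank ≤ I

/-- `𝒢_{B−I}(ℂ^B)`: Hermitian idempotent `B×B` matrices `P` with `rank (1 − P) ≤ I`. -/
def Grassmannian (B I : ℕ) : Set (Matrix (Fin B) (Fin B) ℂ) :=
  {P | P.IsHermitian ∧ P * P = P ∧ (1 - P).rank ≤ I}

/-- `P` is the orthogonal projection onto the orthogonal complement of the column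
space of `J`. -/
def IsOrthProjComplCol {B I : ℕ} (J : Matrix (Fin B) (Fin I) ℂ)
    (P : Matrix (Fin B) (Fin B) ℂ) : Prop :=
  P.IsHermitian ∧ P * P = P ∧
    LinearMap.range (Matrix.toEuclideanLin P) = (LinearMap.range (Matrix.toEuclideanLin J))ᗮ

/-- Squared Frobenius norm. -/
def sqFrob {m n : ℕ} (A : Matrix (Fin m) (Fin n) ℂ) : ℝ := ∑ i, ∑ j, ‖A i j‖ ^ 2

/-- Right pseudoinverse `S_Tᴴ (S_T S_Tᴴ)⁻¹` of a (full-rank, wide) pilot matrix. -/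
def pinvWide {U T : ℕ} (S_T : Matrix (Fin U) (Fin T) ℂ) : Matrix (Fin T) (Fin U) ℂ :=
  S_T.conjTranspose * (S_T * S_T.conjTranspose)⁻¹

/-- Eclipsing in the channel-estimation sense. -/
def EclipsedCE {U I D T : ℕ} (S_T : Matrix (Fin U) (Fin T) ℂ)
    (S_D : Matrix (Fin U) (Fin D) ℂ) (W_T : Matrix (Fin I) (Fin T) ℂ)
    (W_D : Matrix (Fin I) (Fin D) ℂ) : Prop :=
  ∃ St : Matrix (Fin U) (Fin D) ℂ, (∀ i j, St i j ∈ QPSK) ∧ St ≠ S_D ∧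
    (Matrix.fromRows (S_D - St) (W_D - W_T * pinvWide S_T * St)).rank ≤ I

end

/-!
Write `Y_D - H S̃ = [H, J] N` with `N` the stack of `S_D - S̃` over `W_D`. If `P` annihilates it,
then `[H, J] N = (1 - P) [H, J] N` and injectivity of `[H, J]` give `rank N ≤ rank (1 - P) ≤ I`,
so non-eclipsing forces `S̃ = S_D`. Non-eclipsing also forces `W_D` to have full row rank `I`:
otherwise changing one symbol of `S_D` would eclipse the jammer. Hence `P J W_D = 0` gives
`P J = 0`, so the column space of `J` (of dimension `I`) lies in `ker P ⊆ range (1 - P)` (of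
dimension `≤ I`), whence `ker P = col J` and, `P` being Hermitian, `range P = (col J)ᗮ`.
-/

open Matrix Module LinearMap

namespace Matrix

variable {l m n K : Type*} [Field K]

theorem rank_le_rank_one_sub_of_mul_eq_zero [Fintype m] [DecidableEq m] [Fintype n]
    {P : Matrix m m K} {M : Matrix m n K} (h : P * M = 0) : M.rank ≤ (1 - P).rank := by
  calc M.rank = ((1 - P) * M).rank := by rw [Matrix.sub_mul, Matrix.one_mul, h, sub_zero]
    _ ≤ (1 - P).rank := rank_mul_le_left _ _

theorem rank_mul_eq_right_of_injective [Fintype m] [Fintype n] {A : Matrix l m K}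
    (hA : Function.Injective A.mulVecLin) (B : Matrix m n K) : (A * B).rank = B.rank := by
  rw [rank, rank, mulVecLin_mul, range_comp]
  exact (Submodule.equivMapOfInjective _ hA _).finrank_eq.symm

theorem injective_mulVecLin_of_rank_eq_card [Fintype n] {A : Matrix m n K}
    (h : A.rank = Fintype.card n) : Function.Injective A.mulVecLin := by
  have := finrank_range_add_finrank_ker A.mulVecLin
  rw [finrank_fintype_fun_eq_card, ← rank, h] at this
  rw [← ker_eq_bot, ← Submodule.finrank_eq_zero]
  omega

theorem rank_fromRows_le [Fintype m] [Fintype n] [Fintype l] (A : Matrix m l K)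
    (B : Matrix n l K) : (fromRows A B).rank ≤ A.rank + B.rank := by
  rw [rank_eq_finrank_span_row, rank_eq_finrank_span_row, rank_eq_finrank_span_row]
  have : Set.range (fromRows A B).row = Set.range A.row ∪ Set.range B.row := by
    rw [← Set.Sum.elim_range]; rfl
  rw [this, Submodule.span_union]
  exact Submodule.finrank_add_le_finrank_add_finrank _ _

theorem rank_fromCols_le [Fintype l] [Fintype m] [Fintype n] (A : Matrix l m K)
    (B : Matrix l n K) : (fromCols A B).rank ≤ A.rank + B.rank := by
  rw [← rank_transpose, transpose_fromCols]
  simpa only [rank_transpose] using rank_fromRows_le Aᵀ Bᵀ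

theorem rank_sub_updateRow_update_le_one [Fintype n] [DecidableEq m] [DecidableEq n]
    (A : Matrix m n K) (i : m) (j : n) (c : K) :
    (A - A.updateRow i (Function.update (A i) j c)).rank ≤ 1 := by
  have : A - A.updateRow i (Function.update (A i) j c) =
      vecMulVec (Pi.single i 1) (Pi.single j (A i j - c)) := by
    ext i' j'
    by_cases hi : i' = i <;> by_cases hj : j' = j <;> simp [hi, hj, vecMulVec_apply]
  rw [this]
  exact rank_vecMulVec_le _ _

theorem eq_zero_of_mul_eq_zero_of_rank_eq_card [Finite l] [Fintype m] [Fintype n]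
    {M : Matrix l m K} {W : Matrix m n K} (h : M * W = 0) (hW : W.rank = Fintype.card m) :
    M = 0 := by
  have := rank_add_rank_le_card_of_mul_eq_zero h
  have hM0 : M.rank = 0 := by omega
  have hM : M.mulVecLin = 0 := range_eq_bot.mp (Submodule.finrank_eq_zero.mp hM0)
  ext i j
  simpa using congrFun (LinearMap.congr_fun hM (Pi.single j 1)) i

section Euclidean

variable {𝕜 : Type*} [RCLike 𝕜] [Fintype m] [Fintype n] [DecidableEq n]

theorem finrank_range_toEuclideanLin (A : Matrix m n 𝕜) :
    finrank 𝕜 (range (toEuclideanLin A)) = A.rank :=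
  (rank_eq_finrank_range_toLin A (PiLp.basisFun 2 𝕜 m) (PiLp.basisFun 2 𝕜 n)).symm

theorem mul_eq_zero_iff_range_toEuclideanLin_le_ker [DecidableEq m] {P : Matrix m m 𝕜}
    {J : Matrix m n 𝕜} : P * J = 0 ↔ range (toEuclideanLin J) ≤ ker (toEuclideanLin P) := by
  rw [range_le_ker_iff, ← toLpLin_mul_same, LinearEquiv.map_eq_zero_iff]

theorem ker_toEuclideanLin_le_range_one_sub [DecidableEq m] (P : Matrix m m 𝕜) :
    ker (toEuclideanLin P) ≤ range (toEuclideanLin (1 - P)) :=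
  fun x hx => ⟨x, by simp_all⟩

theorem IsHermitian.ker_toEuclideanLin [DecidableEq m] {P : Matrix m m 𝕜}
    (hP : P.IsHermitian) : ker (toEuclideanLin P) = (range (toEuclideanLin P))ᗮ :=
  (isSymmetric_toEuclideanLin_iff.mpr hP).orthogonal_range.symm

end Euclidean

end Matrix

section OrthProj

variable {B I : ℕ} {J : Matrix (Fin B) (Fin I) ℂ} {P : Matrix (Fin B) (Fin B) ℂ}

theorem isOrthProjComplCol_iff_ker_eq (hP : P.IsHermitian) (hP2 : P * P = P) :
    IsOrthProjComplCol J P ↔ ker (toEuclideanLin P) = range (toEuclideanLin J) := by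
  rw [IsOrthProjComplCol, hP.ker_toEuclideanLin]
  refine ⟨fun h => ?_, fun h => ⟨hP, hP2, ?_⟩⟩
  · rw [h.2.2, Submodule.orthogonal_orthogonal]
  · rw [← h, Submodule.orthogonal_orthogonal]

theorem IsOrthProjComplCol.mul_eq_zero (h : IsOrthProjComplCol J P) : P * J = 0 :=
  mul_eq_zero_iff_range_toEuclideanLin_le_ker.mpr
    ((isOrthProjComplCol_iff_ker_eq h.1 h.2.1).mp h).ge

theorem isOrthProjComplCol_of_mul_eq_zero (hP : P.IsHermitian) (hP2 : P * P = P)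
    (hPJ : P * J = 0) (hrank : (1 - P).rank ≤ J.rank) : IsOrthProjComplCol J P := by
  rw [isOrthProjComplCol_iff_ker_eq hP hP2]
  refine (Submodule.eq_of_le_of_finrank_le
    (mul_eq_zero_iff_range_toEuclideanLin_le_ker.mp hPJ) ?_).symm
  calc finrank ℂ (ker (toEuclideanLin P))
      ≤ finrank ℂ (range (toEuclideanLin (1 - P))) :=
        Submodule.finrank_mono P.ker_toEuclideanLin_le_range_one_sub
    _ ≤ finrank ℂ (range (toEuclideanLin J)) := by
        simpa only [finrank_range_toEuclideanLin] using hrank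

end OrthProj

theorem exists_mem_QPSK_ne (z : ℂ) : ∃ c ∈ QPSK, c ≠ z := by
  have hs : (Real.sqrt 2 : ℂ) ≠ 0 := by norm_num
  have hne : (1 + Complex.I) / (Real.sqrt 2 : ℂ) ≠ (1 - Complex.I) / (Real.sqrt 2 : ℂ) := by
    rw [Ne, div_left_inj' hs]
    intro h
    have := congrArg Complex.im h
    norm_num at this
  by_cases hz : z = (1 + Complex.I) / (Real.sqrt 2 : ℂ)
  · exact ⟨_, by simp [QPSK], hz ▸ hne.symm⟩
  · exact ⟨_, by simp [QPSK], Ne.symm hz⟩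

theorem exists_qpsk_ne_rank_sub_le_one {m n : Type*} [Fintype n] [DecidableEq m]
    [DecidableEq n] (i : m) (j : n) {S : Matrix m n ℂ} (hS : ∀ i j, S i j ∈ QPSK) :
    ∃ St : Matrix m n ℂ, (∀ i j, St i j ∈ QPSK) ∧ St ≠ S ∧ (S - St).rank ≤ 1 := by
  obtain ⟨c, hc, hcS⟩ := exists_mem_QPSK_ne (S i j)
  refine ⟨S.updateRow i (Function.update (S i) j c), fun i' j' => ?_, fun h => hcS ?_,
    S.rank_sub_updateRow_update_le_one i j c⟩
  · by_cases hi : i' = i <;> by_cases hj : j' = j <;> simp [hi, hj, hc, hS]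
  · simpa using congrFun (congrFun h i) j

theorem rank_eq_of_not_eclipsedCSI {U I D : ℕ} (hU : 0 < U) (hD : 0 < D)
    {S : Matrix (Fin U) (Fin D) ℂ} (hS : ∀ i j, S i j ∈ QPSK) {W : Matrix (Fin I) (Fin D) ℂ}
    (h : ¬ EclipsedCSI S W) : W.rank = I := by
  refine le_antisymm W.rank_le_height (not_lt.mp fun hlt => h ?_)
  obtain ⟨St, hSt, hne, hrk⟩ := exists_qpsk_ne_rank_sub_le_one ⟨0, hU⟩ ⟨0, hD⟩ hS
  exact ⟨St, hSt, hne, (rank_fromRows_le _ _).trans (by omega)⟩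

theorem stmt0_general (B U I D : ℕ) (hU : 0 < U) (hD : 0 < D)
    (H : Matrix (Fin B) (Fin U) ℂ) (J : Matrix (Fin B) (Fin I) ℂ)
    (hrank : (Matrix.fromCols H J).rank = U + I)
    (S_D : Matrix (Fin U) (Fin D) ℂ) (hSD : ∀ i j, S_D i j ∈ QPSK)
    (W_D : Matrix (Fin I) (Fin D) ℂ)
    (Y_D : Matrix (Fin B) (Fin D) ℂ) (hY : Y_D = H * S_D + J * W_D)
    (hecl : ¬ EclipsedCSI S_D W_D) :
    ∀ P ∈ Grassmannian B I, ∀ St : Matrix (Fin U) (Fin D) ℂ, (∀ i j, St i j ∈ QPSK) →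
      (P * (Y_D - H * St) = 0 ↔ (St = S_D ∧ IsOrthProjComplCol J P)) := by
  rintro P ⟨hPherm, hPidem, hPrank⟩ St hSt
  have hinj : Function.Injective (fromCols H J).mulVecLin :=
    injective_mulVecLin_of_rank_eq_card (by simpa using hrank)
  have hJ : J.rank = I := le_antisymm J.rank_le_width <| by
    have := (rank_fromCols_le H J).trans (add_le_add_left H.rank_le_width _)
    omega
  have hfac : Y_D - H * St = fromCols H J * fromRows (S_D - St) W_D := by
    rw [hY, fromCols_mul_fromRows, Matrix.mul_sub]
    abel
  constructor
  · intro h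
    have hN : (fromRows (S_D - St) W_D).rank ≤ I := by
      rw [← rank_mul_eq_right_of_injective hinj, ← hfac]
      exact (rank_le_rank_one_sub_of_mul_eq_zero h).trans hPrank
    obtain rfl : St = S_D := by_contra fun hne => hecl ⟨St, hSt, hne, hN⟩
    have hPJ : P * J = 0 := eq_zero_of_mul_eq_zero_of_rank_eq_card
      (by simpa [hY, Matrix.mul_assoc] using h)
      (by simpa using rank_eq_of_not_eclipsedCSI hU hD hSD hecl)
    exact ⟨rfl, isOrthProjComplCol_of_mul_eq_zero hPherm hPidem hPJ (hPrank.trans hJ.ge)⟩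
  · rintro ⟨rfl, hP⟩
    rw [hY, add_sub_cancel_left, ← Matrix.mul_assoc, hP.mul_eq_zero, Matrix.zero_mul]

/-- With perfect CSI and zero noise, if the jammer is not eclipsed, then
`P (Y_D − H S̃) = 0` iff `S̃ = S_D` and `P` is the orthogonal projection onto the
orthogonal complement of the column space of `J`; in particular the minimization of
the Frobenius norm has minimum value 0, attained at this unique point. -/
theorem stmt0 (B U I D : ℕ) (hB : 0 < B) (hU : 0 < U) (hI : 0 < I) (hD : 0 < D)
    (hBUI : U + I ≤ B)
    (H : Matrix (Fin B) (Fin U) ℂ) (J : Matrix (Fin B) (Fin I) ℂ)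
    (hrank : (Matrix.fromCols H J).rank = U + I)
    (S_D : Matrix (Fin U) (Fin D) ℂ) (hSD : ∀ i j, S_D i j ∈ QPSK)
    (W_D : Matrix (Fin I) (Fin D) ℂ)
    (Y_D : Matrix (Fin B) (Fin D) ℂ) (hY : Y_D = H * S_D + J * W_D)
    (hecl : ¬ EclipsedCSI S_D W_D) :
    ∀ P ∈ Grassmannian B I, ∀ St : Matrix (Fin U) (Fin D) ℂ, (∀ i j, St i j ∈ QPSK) →
      (P * (Y_D - H * St) = 0 ↔ (St = S_D ∧ IsOrthProjComplCol J P)) :=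
  stmt0_general B U I D hU hD H J hrank S_D hSD W_D Y_D hY hecl
end

section
/- Let U, D ≥ 1, fix w ∈ ℂ^D, and let S_D be drawn uniformly at random from S^{U×D}. Then the probability that the single-antenna jammer with transmit vector w is eclipsed (perfect-CSI sense with I = 1, i.e., there exists S̃ ∈ S^{U×D} with S̃ ≠ S_D such that the (U+1)×D matrix obtained by stacking S_D − S̃ on top of wᵀ has rank at most 1) is at most p_e(w), where p_e(w) = 1 if w = 0, and p_e(w) = 1 − (1 − (2^{‖w‖₀} − 1)/4^{‖w‖₀ − 1})^U otherwise. -/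
open scoped BigOperators
open scoped Classical

/-!
Write `S` for the QPSK constellation and `L = ‖w‖₀`. If `S_D` is eclipsed by `S̃ ≠ S_D`, the
rank condition puts every row of `S_D - S̃` on the line through `w ≠ 0`, so some row `s` of `S_D`
satisfies `s + c • w ∈ S^D` with `c ≠ 0`. Rows are independent and uniform, so it suffices to show
that at most `4 (2^L - 1) 4^(D-L)` rows `s ∈ S^D` admit such a `c`.

Two distinct points of `S` differ by `q (i - 1)` (adjacent points) or by `-2 q` (antipodal points)
for some `q ∈ S`, and these differences have fourth powers `4` and `-16`. Fixing `k₀` with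
`w k₀ ≠ 0`, every such row lies in one of the eight product sets `{s | s + c • w ∈ S^D}` with
`c w k₀ ∈ {q (i - 1), -2 q}`. On a coordinate with `w k ≠ 0` such a set allows at most two values
of `s k`, and at most one if `(c w k)^4 ≠ 4`. If all `w k / w k₀` (on the support) are fourth roots
of unity, each antipodal set is a single point on the support, contained in the adjacent sets of
`q` and `i q`; cutting it out of one of them leaves `4 (2^L - 1) 4^(D-L)`. Otherwise some
`ρ = w k₁ / w k₀` has `ρ^4 ≠ 1`, and for each `q` at most one of the two sets is nonempty, with at
most `2^(L-1) 4^(D-L)` elements.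
-/

open Complex Finset

theorem prod_sub_QPSK_eq_pow_four_add_one (z : ℂ) :
    (z - (1 + I) / (Real.sqrt 2 : ℂ)) * (z - (1 - I) / (Real.sqrt 2 : ℂ)) *
      (z - (-1 + I) / (Real.sqrt 2 : ℂ)) * (z - (-1 - I) / (Real.sqrt 2 : ℂ)) = z ^ 4 + 1 := by
  have h2 : ((Real.sqrt 2 : ℝ) : ℂ) ^ 2 = 2 := by norm_cast; simp
  have h4 : ((Real.sqrt 2 : ℝ) : ℂ) ^ 4 = 4 := by
    rw [show 4 = 2 * 2 from rfl, pow_mul, h2]; norm_num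
  have h0 : ((Real.sqrt 2 : ℝ) : ℂ) ≠ 0 := by norm_num
  field_simp
  ring_nf
  rw [I_sq, I_pow_four, h2, h4]
  ring

theorem mem_QPSK_iff {z : ℂ} : z ∈ QPSK ↔ z ^ 4 = -1 := by
  rw [← add_eq_zero_iff_eq_neg, ← prod_sub_QPSK_eq_pow_four_add_one]
  simp only [QPSK, mem_insert, mem_singleton, mul_eq_zero, sub_eq_zero]
  tauto

theorem card_QPSK : #QPSK = 4 := by
  have h0 : ((Real.sqrt 2 : ℝ) : ℂ) ≠ 0 := by norm_num
  rw [QPSK]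
  repeat rw [card_insert_of_notMem]
  all_goals norm_num [div_left_inj' h0, Complex.ext_iff]

theorem ne_zero_of_mem_QPSK {z : ℂ} (hz : z ∈ QPSK) : z ≠ 0 := by
  rintro rfl
  norm_num [mem_QPSK_iff] at hz

theorem mul_mem_QPSK {r z : ℂ} (hr : r ^ 4 = 1) (hz : z ∈ QPSK) : r * z ∈ QPSK := by
  rw [mem_QPSK_iff] at hz ⊢
  rw [mul_pow, hr, hz, one_mul]

theorem eq_one_or_of_pow_four_eq_one {r : ℂ} (h : r ^ 4 = 1) :
    r = 1 ∨ r = -1 ∨ r = I ∨ r = -I := by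
  have : (r - 1) * (r + 1) * ((r - I) * (r + I)) = 0 := by
    linear_combination h - (r ^ 2 - 1) * I_sq
  simp only [mul_eq_zero, sub_eq_zero, add_eq_zero_iff_eq_neg] at this
  tauto

theorem I_sub_one_ne_zero : I - 1 ≠ 0 := by simp [sub_eq_zero, Complex.ext_iff]

theorem I_sub_one_pow_four : (I - 1) ^ 4 = -4 := by
  linear_combination (I ^ 2 - 4 * I + 5) * I_sq

theorem neg_I_sub_one_pow_four : (-I - 1) ^ 4 = -4 := by
  linear_combination (I ^ 2 + 4 * I + 5) * I_sq

noncomputable def diffFiber (d : ℂ) : Finset ℂ := {a ∈ QPSK | a + d ∈ QPSK}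

theorem diffFiber_zero : diffFiber 0 = QPSK :=
  filter_true_of_mem fun a ha => by simpa using ha

theorem eq_mul_of_mem_diffFiber {a d : ℂ} (hd : d ≠ 0) (ha : a ∈ diffFiber d) :
    d = a * (I - 1) ∨ d = a * (-2) ∨ d = a * (-I - 1) := by
  obtain ⟨ha, had⟩ := mem_filter.1 ha
  have ha0 := ne_zero_of_mem_QPSK ha
  have hr : ((a + d) / a) ^ 4 = 1 := by
    rw [div_pow, mem_QPSK_iff.1 ha, mem_QPSK_iff.1 had, div_self (by norm_num)]
  have hd' : d = a * ((a + d) / a - 1) := by field_simp; ring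
  rcases eq_one_or_of_pow_four_eq_one hr with h | h | h | h <;> rw [h] at hd'
  · exact absurd (by simpa using hd') hd
  · exact Or.inr (Or.inl (by linear_combination hd'))
  · exact Or.inl hd'
  · exact Or.inr (Or.inr hd')

theorem mem_diffFiber_cases {a d : ℂ} (hd : d ≠ 0) (ha : a ∈ diffFiber d) :
    (d ^ 4 = 4 ∧ (a = d / (I - 1) ∨ a = d / (-I - 1))) ∨ (d ^ 4 = -16 ∧ a = -d / 2) := by
  have ha4 : a ^ 4 = -1 := mem_QPSK_iff.1 (mem_filter.1 ha).1
  have hI := I_sub_one_ne_zero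
  have hI' : -I - 1 ≠ 0 := by simp [sub_eq_zero, Complex.ext_iff]
  rcases eq_mul_of_mem_diffFiber hd ha with rfl | rfl | rfl
  · left
    refine ⟨?_, Or.inl (by field_simp)⟩
    rw [mul_pow, ha4, I_sub_one_pow_four]; norm_num
  · right
    exact ⟨by linear_combination 16 * ha4, by ring⟩
  · left
    refine ⟨?_, Or.inr (by field_simp)⟩
    rw [mul_pow, ha4, neg_I_sub_one_pow_four]; norm_num

theorem pow_four_of_mem_diffFiber {a d : ℂ} (hd : d ≠ 0) (ha : a ∈ diffFiber d) :
    d ^ 4 = 4 ∨ d ^ 4 = -16 := by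
  rcases mem_diffFiber_cases hd ha with h | h
  exacts [Or.inl h.1, Or.inr h.1]

theorem card_diffFiber_le_one {d : ℂ} (hd : d ≠ 0) (h4 : d ^ 4 ≠ 4) : #(diffFiber d) ≤ 1 := by
  have key : ∀ a ∈ diffFiber d, a = -d / 2 := fun a ha => by
    rcases mem_diffFiber_cases hd ha with h | h
    exacts [absurd h.1 h4, h.2]
  exact card_le_one.2 fun a ha b hb => (key a ha).trans (key b hb).symm

theorem card_diffFiber_le_two {d : ℂ} (hd : d ≠ 0) : #(diffFiber d) ≤ 2 := by
  by_cases h4 : d ^ 4 = 4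
  · have hsub : diffFiber d ⊆ {d / (I - 1), d / (-I - 1)} := fun a ha => by
      rcases mem_diffFiber_cases hd ha with h | h
      · simpa using h.2
      · norm_num [h.1] at h4
    exact (card_le_card hsub).trans card_le_two
  · exact (card_diffFiber_le_one hd h4).trans (by norm_num)

theorem diffFiber_neg_two_mul {q : ℂ} (hq : q ∈ QPSK) : diffFiber (-2 * q) = {q} := by
  have hq4 := mem_QPSK_iff.1 hq
  refine eq_singleton_iff_unique_mem.2 ⟨mem_filter.2 ⟨hq, ?_⟩, fun a ha => ?_⟩
  · rw [mem_QPSK_iff]; linear_combination hq4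
  · have hd : -2 * q ≠ 0 := mul_ne_zero (by norm_num) (ne_zero_of_mem_QPSK hq)
    rcases mem_diffFiber_cases hd ha with h | h
    · have h4 := h.1
      rw [mul_pow, hq4] at h4
      norm_num at h4
    · rw [h.2]; ring

theorem card_diffFiber_mul_le {c : ℂ} (hc : c ≠ 0) (d : ℂ) :
    #(diffFiber (c * d)) ≤ if d = 0 then 4 else 2 := by
  split_ifs with hd
  · rw [hd, mul_zero, diffFiber_zero, card_QPSK]
  · exact card_diffFiber_le_two (mul_ne_zero hc hd)

section ShiftSet

variable {ι : Type*} [Fintype ι]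

theorem prod_ite_eq_zero_eq_pow_mul_pow (w : ι → ℂ) (m : ℕ) :
    ∏ k, (if w k = 0 then 4 else m) = m ^ #{k | w k ≠ 0} * 4 ^ #{k | w k = 0} := by
  rw [prod_ite, prod_const, prod_const, mul_comm]

variable [DecidableEq ι]

noncomputable def shiftSet (w : ι → ℂ) (c : ℂ) : Finset (ι → ℂ) :=
  Fintype.piFinset fun k => diffFiber (c * w k)

theorem mem_shiftSet {w s : ι → ℂ} {c : ℂ} :
    s ∈ shiftSet w c ↔ ∀ k, s k ∈ QPSK ∧ s k + c * w k ∈ QPSK := by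
  simp [shiftSet, diffFiber]

theorem card_shiftSet_le {w : ι → ℂ} {c : ℂ} (hc : c ≠ 0) :
    #(shiftSet w c) ≤ 2 ^ #{k | w k ≠ 0} * 4 ^ #{k | w k = 0} := by
  rw [shiftSet, Fintype.card_piFinset, ← prod_ite_eq_zero_eq_pow_mul_pow]
  exact prod_le_prod' fun k _ => card_diffFiber_mul_le hc (w k)

theorem two_mul_card_shiftSet_le {w : ι → ℂ} {c : ℂ} (hc : c ≠ 0) {k₁ : ι} (hk₁ : w k₁ ≠ 0)
    (h4 : (c * w k₁) ^ 4 ≠ 4) :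
    2 * #(shiftSet w c) ≤ 2 ^ #{k | w k ≠ 0} * 4 ^ #{k | w k = 0} := by
  rw [shiftSet, Fintype.card_piFinset, ← prod_ite_eq_zero_eq_pow_mul_pow,
    ← mul_prod_erase _ _ (mem_univ k₁), ← mul_prod_erase _ _ (mem_univ k₁), if_neg hk₁, ← mul_assoc]
  refine Nat.mul_le_mul ?_ (prod_le_prod' fun k _ => card_diffFiber_mul_le hc (w k))
  linarith [card_diffFiber_le_one (mul_ne_zero hc hk₁) h4]

theorem pow_four_of_mem_shiftSet {w s : ι → ℂ} {c : ℂ} (hc : c ≠ 0) (hs : s ∈ shiftSet w c)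
    {k : ι} (hk : w k ≠ 0) : (c * w k) ^ 4 = 4 ∨ (c * w k) ^ 4 = -16 :=
  pow_four_of_mem_diffFiber (mul_ne_zero hc hk) (Fintype.mem_piFinset.1 hs k)

end ShiftSet

section Confusable

variable {ι : Type*}

def Confusable (w s : ι → ℂ) : Prop := ∃ c : ℂ, c ≠ 0 ∧ ∀ k, s k + c * w k ∈ QPSK

variable [Fintype ι] [DecidableEq ι] {w : ι → ℂ} {k₀ : ι}

noncomputable def confusableRows (w : ι → ℂ) : Finset (ι → ℂ) :=
  {s ∈ Fintype.piFinset fun _ => QPSK | Confusable w s}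

theorem exists_mem_shiftSet_of_confusable (hk₀ : w k₀ ≠ 0) {s : ι → ℂ}
    (hs : ∀ k, s k ∈ QPSK) (h : Confusable w s) :
    ∃ q ∈ QPSK, s ∈ shiftSet w (q * (I - 1) / w k₀) ∪ shiftSet w (-2 * q / w k₀) := by
  obtain ⟨c, hc, hsc⟩ := h
  have hmem : s ∈ shiftSet w c := mem_shiftSet.2 fun k => ⟨hs k, hsc k⟩
  have hc₀ : s k₀ ∈ diffFiber (c * w k₀) := mem_filter.2 ⟨hs k₀, hsc k₀⟩
  rcases eq_mul_of_mem_diffFiber (mul_ne_zero hc hk₀) hc₀ with h | h | h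
  · have hc' : c = s k₀ * (I - 1) / w k₀ := by rw [eq_div_iff hk₀, h]
    exact ⟨s k₀, hs k₀, mem_union_left _ (hc' ▸ hmem)⟩
  · have hc' : c = -2 * s k₀ / w k₀ := by rw [eq_div_iff hk₀]; linear_combination h
    exact ⟨s k₀, hs k₀, mem_union_right _ (hc' ▸ hmem)⟩
  · have hc' : c = I * s k₀ * (I - 1) / w k₀ := by
      rw [eq_div_iff hk₀]; linear_combination h - s k₀ * I_sq
    exact ⟨I * s k₀, mul_mem_QPSK I_pow_four (hs k₀), mem_union_left _ (hc' ▸ hmem)⟩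

variable {q : ℂ}

theorem eq_of_mem_shiftSet_neg_two_mul (hR : ∀ k, w k ≠ 0 → (w k / w k₀) ^ 4 = 1) (hq : q ∈ QPSK)
    {s : ι → ℂ} (hs : s ∈ shiftSet w (-2 * q / w k₀)) {k : ι} (hk : w k ≠ 0) :
    s k = q * (w k / w k₀) := by
  have hq' : q * (w k / w k₀) ∈ QPSK := mul_comm q _ ▸ mul_mem_QPSK (hR k hk) hq
  have := Fintype.mem_piFinset.1 hs k
  rwa [show -2 * q / w k₀ * w k = -2 * (q * (w k / w k₀)) by ring, diffFiber_neg_two_mul hq',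
    mem_singleton] at this

theorem card_shiftSet_neg_two_mul (hR : ∀ k, w k ≠ 0 → (w k / w k₀) ^ 4 = 1) (hq : q ∈ QPSK) :
    #(shiftSet w (-2 * q / w k₀)) = 4 ^ #{k | w k = 0} := by
  rw [shiftSet, Fintype.card_piFinset]
  refine (prod_congr rfl fun k _ => ?_).trans
    ((prod_ite_eq_zero_eq_pow_mul_pow w 1).trans (by rw [one_pow, one_mul]))
  split_ifs with hk
  · rw [hk, mul_zero, diffFiber_zero, card_QPSK]
  · have hq' : q * (w k / w k₀) ∈ QPSK := mul_comm q _ ▸ mul_mem_QPSK (hR k hk) hq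
    rw [show -2 * q / w k₀ * w k = -2 * (q * (w k / w k₀)) by ring, diffFiber_neg_two_mul hq',
      card_singleton]

theorem shiftSet_neg_two_mul_subset (hR : ∀ k, w k ≠ 0 → (w k / w k₀) ^ 4 = 1) (hq : q ∈ QPSK)
    {r : ℂ} (hr : (1 + r * (I - 1)) ^ 4 = 1) :
    shiftSet w (-2 * q / w k₀) ⊆ shiftSet w (r * q * (I - 1) / w k₀) := fun s hs => by
  refine mem_shiftSet.2 fun k => ⟨(mem_shiftSet.1 hs k).1, ?_⟩
  by_cases hk : w k = 0
  · simpa [hk] using (mem_shiftSet.1 hs k).1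
  · rw [eq_of_mem_shiftSet_neg_two_mul hR hq hs hk,
      show q * (w k / w k₀) + r * q * (I - 1) / w k₀ * w k = (1 + r * (I - 1)) * (q * (w k / w k₀))
        by ring]
    exact mul_mem_QPSK hr (mul_comm q _ ▸ mul_mem_QPSK (hR k hk) hq)

theorem card_confusableRows_add_le_of_pow_four_eq_one (hk₀ : w k₀ ≠ 0)
    (hR : ∀ k, w k ≠ 0 → (w k / w k₀) ^ 4 = 1) :
    #(confusableRows w) + 4 * 4 ^ #{k | w k = 0} ≤
      4 * (2 ^ #{k | w k ≠ 0} * 4 ^ #{k | w k = 0}) := by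
  set E := fun q => shiftSet w (q * (I - 1) / w k₀)
  set Δ := fun q => shiftSet w (-2 * q / w k₀)
  have hΔE : ∀ q ∈ QPSK, Δ q ⊆ E q := fun q hq => by
    simpa only [one_mul] using shiftSet_neg_two_mul_subset hR hq (r := 1) (by simp)
  have hΔE' : ∀ q ∈ QPSK, Δ q ⊆ E (I * q) := fun q hq =>
    shiftSet_neg_two_mul_subset hR hq (by
      rw [show 1 + I * (I - 1) = -I by linear_combination I_sq, neg_pow, I_pow_four]; norm_num)
  have hcover : confusableRows w ⊆ QPSK.biUnion fun q => E q \ Δ q := fun s hs => by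
    obtain ⟨hsQ, hconf⟩ := mem_filter.1 hs
    obtain ⟨q, hq, hsq⟩ :=
      exists_mem_shiftSet_of_confusable hk₀ (Fintype.mem_piFinset.1 hsQ) hconf
    have hsE : s ∈ E q := (mem_union.1 hsq).elim id (hΔE q hq ·)
    by_cases hsΔ : s ∈ Δ q
    · have hIq : I * q ∈ QPSK := mul_mem_QPSK I_pow_four hq
      refine mem_biUnion.2 ⟨I * q, hIq, mem_sdiff.2 ⟨hΔE' q hq hsΔ, fun hsΔ' => ?_⟩⟩
      have h := (eq_of_mem_shiftSet_neg_two_mul hR hq hsΔ hk₀).symm.trans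
        (eq_of_mem_shiftSet_neg_two_mul hR hIq hsΔ' hk₀)
      rw [div_self hk₀, mul_one, mul_one] at h
      exact ne_zero_of_mem_QPSK hq (by linear_combination (1 + I) / 2 * h + q / 2 * I_sq)
    · exact mem_biUnion.2 ⟨q, hq, mem_sdiff.2 ⟨hsE, hsΔ⟩⟩
  have hc : ∀ q ∈ QPSK, q * (I - 1) / w k₀ ≠ 0 := fun q hq =>
    div_ne_zero (mul_ne_zero (ne_zero_of_mem_QPSK hq) I_sub_one_ne_zero) hk₀
  calc #(confusableRows w) + 4 * 4 ^ #{k | w k = 0}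
      ≤ ∑ q ∈ QPSK, #(E q \ Δ q) + ∑ q ∈ QPSK, #(Δ q) := by
        gcongr
        · exact (card_le_card hcover).trans card_biUnion_le
        · rw [sum_congr rfl fun q hq => card_shiftSet_neg_two_mul hR hq, sum_const, card_QPSK,
            smul_eq_mul]
    _ = ∑ q ∈ QPSK, #(E q) := by
        rw [← sum_add_distrib]
        exact sum_congr rfl fun q hq => card_sdiff_add_card_eq_card (hΔE q hq)
    _ ≤ ∑ _q ∈ QPSK, 2 ^ #{k | w k ≠ 0} * 4 ^ #{k | w k = 0} :=
        sum_le_sum fun q hq => card_shiftSet_le (hc q hq)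
    _ = 4 * (2 ^ #{k | w k ≠ 0} * 4 ^ #{k | w k = 0}) := by rw [sum_const, card_QPSK, smul_eq_mul]

theorem two_mul_card_add_card_shiftSet_le (hk₀ : w k₀ ≠ 0) {k₁ : ι} (hk₁ : w k₁ ≠ 0)
    (hρ : (w k₁ / w k₀) ^ 4 ≠ 1) (hq : q ∈ QPSK) :
    2 * (#(shiftSet w (q * (I - 1) / w k₀)) + #(shiftSet w (-2 * q / w k₀))) ≤
      2 ^ #{k | w k ≠ 0} * 4 ^ #{k | w k = 0} := by
  have hq4 := mem_QPSK_iff.1 hq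
  have hq0 := ne_zero_of_mem_QPSK hq
  have hcE : q * (I - 1) / w k₀ ≠ 0 := div_ne_zero (mul_ne_zero hq0 I_sub_one_ne_zero) hk₀
  have hcΔ : -2 * q / w k₀ ≠ 0 := div_ne_zero (mul_ne_zero (by norm_num) hq0) hk₀
  have hE₁ : (q * (I - 1) / w k₀ * w k₁) ^ 4 = 4 * (w k₁ / w k₀) ^ 4 := by
    rw [show q * (I - 1) / w k₀ * w k₁ = q * (I - 1) * (w k₁ / w k₀) by ring, mul_pow, mul_pow,
      hq4, I_sub_one_pow_four]
    ring
  have hΔ₁ : (-2 * q / w k₀ * w k₁) ^ 4 = -16 * (w k₁ / w k₀) ^ 4 := by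
    rw [show -2 * q / w k₀ * w k₁ = -2 * q * (w k₁ / w k₀) by ring, mul_pow, mul_pow, hq4]
    ring
  have hΔ₀ : (-2 * q / w k₀ * w k₀) ^ 4 = -16 := by
    rw [div_mul_cancel₀ _ hk₀, mul_pow, hq4]; norm_num
  have hempty : shiftSet w (q * (I - 1) / w k₀) = ∅ ∨ shiftSet w (-2 * q / w k₀) = ∅ := by
    by_contra! h
    obtain ⟨⟨s, hs⟩, ⟨t, ht⟩⟩ := h
    have hρ₄ : (w k₁ / w k₀) ^ 4 = -4 := by
      rcases pow_four_of_mem_shiftSet hcE hs hk₁ with h₁ | h₁ <;> rw [hE₁] at h₁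
      · exact absurd (by linear_combination h₁ / 4) hρ
      · linear_combination h₁ / 4
    have h₂ := pow_four_of_mem_shiftSet hcΔ ht hk₁
    rw [hΔ₁, hρ₄] at h₂
    norm_num at h₂
  rcases hempty with h | h
  · rw [h, card_empty, zero_add]
    exact two_mul_card_shiftSet_le hcΔ hk₀ (by rw [hΔ₀]; norm_num)
  · rw [h, card_empty, add_zero]
    exact two_mul_card_shiftSet_le hcE hk₁ (by rw [hE₁]; contrapose! hρ; linear_combination hρ / 4)

theorem two_mul_card_confusableRows_le_of_pow_four_ne_one (hk₀ : w k₀ ≠ 0) {k₁ : ι}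
    (hk₁ : w k₁ ≠ 0) (hρ : (w k₁ / w k₀) ^ 4 ≠ 1) :
    2 * #(confusableRows w) ≤ 4 * (2 ^ #{k | w k ≠ 0} * 4 ^ #{k | w k = 0}) := by
  have hcover : confusableRows w ⊆
      QPSK.biUnion fun q => shiftSet w (q * (I - 1) / w k₀) ∪ shiftSet w (-2 * q / w k₀) :=
    fun s hs => by
      obtain ⟨hsQ, hconf⟩ := mem_filter.1 hs
      obtain ⟨q, hq, hsq⟩ :=
        exists_mem_shiftSet_of_confusable hk₀ (Fintype.mem_piFinset.1 hsQ) hconf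
      exact mem_biUnion.2 ⟨q, hq, hsq⟩
  calc 2 * #(confusableRows w)
      ≤ ∑ q ∈ QPSK, 2 * (#(shiftSet w (q * (I - 1) / w k₀)) + #(shiftSet w (-2 * q / w k₀))) := by
        rw [← mul_sum]
        gcongr
        exact (card_le_card hcover).trans
          (card_biUnion_le.trans (sum_le_sum fun _ _ => card_union_le _ _))
    _ ≤ ∑ _q ∈ QPSK, 2 ^ #{k | w k ≠ 0} * 4 ^ #{k | w k = 0} :=
        sum_le_sum fun q hq => two_mul_card_add_card_shiftSet_le hk₀ hk₁ hρ hq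
    _ = 4 * (2 ^ #{k | w k ≠ 0} * 4 ^ #{k | w k = 0}) := by rw [sum_const, card_QPSK, smul_eq_mul]

theorem card_confusableRows_add_le (hw : w ≠ 0) :
    #(confusableRows w) + 4 * 4 ^ #{k | w k = 0} ≤
      4 * (2 ^ #{k | w k ≠ 0} * 4 ^ #{k | w k = 0}) := by
  obtain ⟨k₀, hk₀⟩ : ∃ k, w k ≠ 0 := Function.ne_iff.1 hw
  by_cases hR : ∀ k, w k ≠ 0 → (w k / w k₀) ^ 4 = 1
  · exact card_confusableRows_add_le_of_pow_four_eq_one hk₀ hR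
  · push Not at hR
    obtain ⟨k₁, hk₁, hρ⟩ := hR
    have h := two_mul_card_confusableRows_le_of_pow_four_ne_one hk₀ hk₁ hρ
    have hn : 2 ≤ 2 ^ #{k | w k ≠ 0} :=
      Nat.le_self_pow (card_ne_zero_of_mem (mem_filter.2 ⟨mem_univ k₀, hk₀⟩)) 2
    have := Nat.mul_le_mul_right (4 ^ #{k | w k = 0}) hn
    linarith

theorem card_confusableRows_div_le (hw : w ≠ 0) :
    (#(confusableRows w) : ℝ) / #(Fintype.piFinset fun _ : ι => QPSK) ≤
      (2 ^ #{k | w k ≠ 0} - 1) / 4 ^ (#{k | w k ≠ 0} - 1) := by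
  obtain ⟨k₀, hk₀⟩ : ∃ k, w k ≠ 0 := Function.ne_iff.1 hw
  have hcount := card_confusableRows_add_le hw
  have hsplit : #{k | w k ≠ 0} + #{k | w k = 0} = Fintype.card ι := by
    simpa only [not_not, card_univ] using
      card_filter_add_card_filter_not (s := univ) fun k => w k ≠ 0
  have hn : #{k | w k ≠ 0} ≠ 0 := card_ne_zero_of_mem (a := k₀) (by simpa using hk₀)
  obtain ⟨m, hm⟩ := Nat.exists_eq_add_one_of_ne_zero hn
  rw [Fintype.card_piFinset, prod_const, card_QPSK, card_univ, ← hsplit, hm, Nat.add_sub_cancel]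
  push_cast
  rw [div_le_div_iff₀ (by positivity) (by positivity)]
  rw [hm] at hcount
  have hcount' : (#(confusableRows w) : ℝ) + 4 * 4 ^ #{k | w k = 0} ≤
      4 * (2 ^ (m + 1) * 4 ^ #{k | w k = 0}) := by exact_mod_cast hcount
  calc (#(confusableRows w) : ℝ) * 4 ^ m
      ≤ (4 * (2 ^ (m + 1) * 4 ^ #{k | w k = 0}) - 4 * 4 ^ #{k | w k = 0}) * 4 ^ m := by
        gcongr; linarith
    _ = (2 ^ (m + 1) - 1) * 4 ^ (m + 1 + #{k | w k = 0}) := by ring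

end Confusable

theorem exists_smul_eq_of_rank_fromRows_le_one {K m n : Type*} [Field K] [Fintype m] [Fintype n]
    (A : Matrix m n K) {v : n → K} (hv : v ≠ 0)
    (h : (A.fromRows (Matrix.of fun _ : Fin 1 => v)).rank ≤ 1) (i : m) : ∃ c : K, c • v = A i := by
  set M := A.fromRows (Matrix.of fun _ : Fin 1 => v)
  have hspan : K ∙ v = Submodule.span K (Set.range M.row) := by
    refine Submodule.eq_of_le_of_finrank_le
      (Submodule.span_singleton_le_iff_mem _ _ |>.2 (Submodule.subset_span ⟨Sum.inr 0, rfl⟩)) ?_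
    rw [finrank_span_singleton hv, ← Matrix.rank_eq_finrank_span_row]
    exact h
  exact Submodule.mem_span_singleton.1 (hspan ▸ Submodule.subset_span ⟨Sum.inl i, rfl⟩)

theorem exists_confusable_of_eclipsedCSI {U D : ℕ} {S : Matrix (Fin U) (Fin D) ℂ}
    {w : Fin D → ℂ} (hw : w ≠ 0) (h : EclipsedCSI S (Matrix.of fun _ : Fin 1 => w)) :
    ∃ u, Confusable w (S u) := by
  obtain ⟨St, hSt, hne, hrank⟩ := h
  obtain ⟨u, hu⟩ := Function.ne_iff.1 hne
  obtain ⟨c, hc⟩ := exists_smul_eq_of_rank_fromRows_le_one (S - St) hw hrank u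
  refine ⟨u, -c, fun hc0 => hu ?_, fun k => ?_⟩
  · rw [neg_eq_zero.1 hc0, zero_smul] at hc
    exact (sub_eq_zero.1 hc.symm).symm
  · have hck := congrFun hc k
    simp only [Pi.smul_apply, smul_eq_mul, Matrix.sub_apply] at hck
    convert hSt u k using 1
    linear_combination -hck

theorem card_filter_exists_add_pow {ι α : Type*} [Fintype ι] [DecidableEq ι] (V : Finset α)
    (P : α → Prop) [DecidablePred P] [DecidablePred fun S : ι → α => ∃ i, P (S i)] :
    #{S ∈ Fintype.piFinset fun _ : ι => V | ∃ i, P (S i)} + #{x ∈ V | ¬P x} ^ Fintype.card ι =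
      #V ^ Fintype.card ι := by
  have hgood : {S ∈ Fintype.piFinset fun _ : ι => V | ¬∃ i, P (S i)} =
      Fintype.piFinset fun _ => {x ∈ V | ¬P x} := by
    ext S
    simp only [mem_filter, Fintype.mem_piFinset, not_exists, forall_and]
  have hcard := card_filter_add_card_filter_not (s := Fintype.piFinset fun _ : ι => V)
    fun S => ∃ i, P (S i)
  simpa only [hgood, Fintype.card_piFinset, prod_const, card_univ] using hcard

theorem card_filter_exists_div_eq {ι α : Type*} [Fintype ι] [DecidableEq ι] {V : Finset α}
    (hV : V.Nonempty) (P : α → Prop) [DecidablePred P]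
    [DecidablePred fun S : ι → α => ∃ i, P (S i)] :
    (#{S ∈ Fintype.piFinset fun _ : ι => V | ∃ i, P (S i)} : ℝ) / #V ^ Fintype.card ι =
      1 - (1 - #{x ∈ V | P x} / #V) ^ Fintype.card ι := by
  have hV0 : (#V : ℝ) ≠ 0 := by exact_mod_cast hV.card_pos.ne'
  have hgood : (#V : ℝ) - #{x ∈ V | P x} = #{x ∈ V | ¬P x} := by
    rw [← card_filter_add_card_filter_not (s := V) P]; push_cast; ring
  rw [one_sub_div hV0, hgood, div_pow, eq_sub_iff_add_eq, ← add_div,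
    div_eq_one_iff_eq (pow_ne_zero _ hV0)]
  exact_mod_cast card_filter_exists_add_pow V P

theorem two_pow_sub_one_le_four_pow_pred (n : ℕ) : (2 : ℝ) ^ n - 1 ≤ 4 ^ (n - 1) := by
  rcases n with _ | m
  · norm_num
  · have h4 : (4 : ℝ) ^ m = (2 ^ m) ^ 2 := by rw [← pow_mul, mul_comm, pow_mul]; norm_num
    rw [Nat.add_sub_cancel, pow_succ, h4]
    nlinarith [sq_nonneg ((2 : ℝ) ^ m - 1)]

theorem stmt1_general (U D : ℕ) (w : Fin D → ℂ) :
    probM U D (fun S_D => EclipsedCSI S_D (Matrix.of fun _ : Fin 1 => w)) ≤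
      (if w = 0 then (1 : ℝ)
       else 1 - (1 - ((2 : ℝ) ^ (zeroNorm w) - 1) / (4 : ℝ) ^ (zeroNorm w - 1)) ^ U) := by
  split_ifs with hw
  · exact div_le_one_of_le₀ (by exact_mod_cast card_filter_le _ _) (Nat.cast_nonneg _)
  have hV : (qpskVecs D).Nonempty :=
    ⟨fun _ => (1 + I) / (Real.sqrt 2 : ℂ), Fintype.mem_piFinset.2 fun _ => by simp [QPSK]⟩
  have hp : 0 ≤ 1 - ((2 : ℝ) ^ zeroNorm w - 1) / 4 ^ (zeroNorm w - 1) :=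
    sub_nonneg.2 (div_le_one_of_le₀ (two_pow_sub_one_le_four_pow_pred _) (by positivity))
  have hcard : (#(qpskMatrices U D) : ℝ) = #(qpskVecs D) ^ U := by
    change (#(Fintype.piFinset fun _ : Fin U => qpskVecs D) : ℝ) = _
    rw [Fintype.card_piFinset, prod_const, card_univ, Fintype.card_fin, Nat.cast_pow]
  have hexists := card_filter_exists_div_eq (ι := Fin U) hV (Confusable w)
  rw [Fintype.card_fin] at hexists
  calc probM U D (fun S_D => EclipsedCSI S_D (Matrix.of fun _ : Fin 1 => w))
      ≤ (#{S ∈ Fintype.piFinset fun _ : Fin U => qpskVecs D | ∃ u, Confusable w (S u)} : ℝ) /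
          #(qpskVecs D) ^ U := by
        rw [probM, hcard]
        gcongr
        exact card_le_card (monotone_filter_right _ fun S _ => exists_confusable_of_eclipsedCSI hw)
    _ = 1 - (1 - #{s ∈ qpskVecs D | Confusable w s} / #(qpskVecs D)) ^ U := hexists
    _ ≤ _ := by
        gcongr 1 - (1 - ?_) ^ U
        exact card_confusableRows_div_le hw

/-- The probability that a single-antenna jammer with transmit vector `w`
is eclipsed (perfect-CSI sense) is at most `p_e(w)`. -/
theorem stmt1 (U D : ℕ) (hU : 0 < U) (hD : 0 < D) (w : Fin D → ℂ) :
    probM U D (fun S_D => EclipsedCSI S_D (Matrix.of fun _ : Fin 1 => w)) ≤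
      (if w = 0 then (1 : ℝ)
       else 1 - (1 - ((2 : ℝ) ^ (zeroNorm w) - 1) / (4 : ℝ) ^ (zeroNorm w - 1)) ^ U) :=
  stmt1_general U D w
end

section
/- Let U, D ≥ 1, T ≥ U, and let S_T ∈ ℂ^{U×T} have full rank U with right pseudoinverse S_T⁺ = S_Tᴴ(S_T S_Tᴴ)⁻¹. Suppose a single-antenna jammer (I = 1) transmits w_T ∈ ℂ^T equal to the first row of S_T (transposed) during the pilot phase and an arbitrary fixed w_D ∈ S^D during the data phase. If S_D is drawn uniformly at random from S^{U×D}, then the jammer is eclipsed (channel-estimation sense) whenever w_Dᵀ differs from the first row of S_D; consequently, the probability that the jammer is eclipsed is at least 1 − 4^{−D}. -/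
open scoped BigOperators
open scoped Classical

/-! Take `S̃` to be `S_D` with its first row replaced by `w_D`. Since `S_T S_T⁺ = 1`, the
jammer's pilot-contaminated term `W_T S_T⁺ S̃` is the first row of `S̃`, namely `w_D`, so the
lower block of the stacked matrix vanishes, while `S_D − S̃` has a single nonzero row: the
stacked matrix has rank at most `1`. Hence the jammer can only fail to be eclipsed when the
first row of `S_D` equals `w_D`, an event of probability `4^{-D}`. -/

open Finset
open scoped Matrix

lemma card_QPSK_s3 : QPSK.card = 4 := by
  have hsqrt : (Real.sqrt 2 : ℂ) ≠ 0 := by norm_cast; positivity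
  refine card_eq_four.mpr ⟨_, _, _, _, ?_, ?_, ?_, ?_, ?_, ?_, rfl⟩ <;>
    rw [Ne, div_left_inj' hsqrt, Complex.ext_iff] <;> norm_num

lemma Matrix.isUnit_of_rank_eq_card {K n : Type*} [Field K] [Fintype n] [DecidableEq n]
    {A : Matrix n n K} (h : A.rank = Fintype.card n) : IsUnit A := by
  rw [← Matrix.mulVec_surjective_iff_isUnit]
  refine LinearMap.range_eq_top.mp
    (Submodule.eq_top_of_finrank_eq (S := LinearMap.range A.mulVecLin) ?_)
  rwa [Module.finrank_fintype_fun_eq_card]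

open scoped ComplexOrder in
lemma mul_pinvWide_of_rank_eq {U T : ℕ} {S : Matrix (Fin U) (Fin T) ℂ} (hS : S.rank = U) :
    S * pinvWide S = 1 := by
  have hGram : IsUnit (S * Sᴴ) :=
    Matrix.isUnit_of_rank_eq_card <| by
      rw [Matrix.rank_self_mul_conjTranspose, hS, Fintype.card_fin]
  rw [pinvWide, ← Matrix.mul_assoc,
    Matrix.mul_nonsing_inv _ ((Matrix.isUnit_iff_isUnit_det _).mp hGram)]

lemma Matrix.fromRows_sub_updateRow_zero {R m m' n : Type*} [Ring R] [DecidableEq m]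
    (A : Matrix m n R) (i : m) (v : n → R) :
    fromRows (A - A.updateRow i v) (0 : Matrix m' n R) =
      vecMulVec (Pi.single (Sum.inl i) 1) (A i - v) := by
  ext (a | b) j
  · by_cases h : a = i
    · subst h; simp [vecMulVec_apply]
    · simp [vecMulVec_apply, h]
  · simp [vecMulVec_apply]

lemma Matrix.of_const_row_mul {R m n p ι : Type*} [Fintype n] [NonUnitalNonAssocSemiring R]
    (A : Matrix m n R) (B : Matrix n p R) (i : m) :
    (of fun _ : ι => A i) * B = of fun _ : ι => (A * B) i := by
  ext; simp [mul_apply]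

lemma eclipsedCE_of_ne_row {U D T : ℕ} {S_T : Matrix (Fin U) (Fin T) ℂ} (hST : S_T.rank = U)
    (z : Fin U) {w_D : Fin D → ℂ} (hwD : ∀ k, w_D k ∈ QPSK)
    {S_D : Matrix (Fin U) (Fin D) ℂ} (hSD : ∀ i j, S_D i j ∈ QPSK) (hne : w_D ≠ S_D z) :
    EclipsedCE S_T S_D (Matrix.of fun _ : Fin 1 => S_T z) (Matrix.of fun _ : Fin 1 => w_D) := by
  refine ⟨S_D.updateRow z w_D, fun i j => ?_, fun h => hne ?_, ?_⟩
  · rw [Matrix.updateRow_apply]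
    split_ifs
    exacts [hwD j, hSD i j]
  · rw [← h, Matrix.updateRow_self]
  · rw [Matrix.of_const_row_mul, mul_pinvWide_of_rank_eq hST, Matrix.of_const_row_mul,
      Matrix.one_mul, Matrix.updateRow_self, sub_self, Matrix.fromRows_sub_updateRow_zero]
    exact Matrix.rank_vecMulVec_le _ _

lemma Fintype.card_filter_piFinset_const_mul_card {ι κ : Type*} [Fintype ι] [DecidableEq ι]
    [DecidableEq κ] (s : Finset κ) (i : ι) {x : κ} (hx : x ∈ s) :
    #{f ∈ piFinset fun _ : ι => s | f i = x} * #s = #(piFinset fun _ : ι => s) := by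
  rw [card_filter_piFinset_const_eq_of_mem s i hx, card_piFinset, prod_const, card_univ,
    ← pow_succ, Nat.sub_add_cancel (Fintype.card_pos_iff.mpr ⟨i⟩)]

lemma card_qpskVecs (D : ℕ) : (qpskVecs D).card = 4 ^ D := by
  rw [qpskVecs, Fintype.card_piFinset_const, card_QPSK_s3]

lemma mem_qpskMatrices {U D : ℕ} {S : Matrix (Fin U) (Fin D) ℂ} :
    S ∈ qpskMatrices U D ↔ ∀ i j, S i j ∈ QPSK :=
  Fintype.mem_piFinset.trans (forall_congr' fun _ => Fintype.mem_piFinset)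

lemma one_sub_inv_le_probM {U D : ℕ} (z : Fin U) {w : Fin D → ℂ} (hw : ∀ k, w k ∈ QPSK)
    (P : Matrix (Fin U) (Fin D) ℂ → Prop) (hP : ∀ S, (∀ i j, S i j ∈ QPSK) → S z ≠ w → P S) :
    1 - ((4 : ℝ) ^ D)⁻¹ ≤ probM U D P := by
  rw [probM]
  set N := qpskMatrices U D
  have hrow : #(N.filter (· z = w)) * 4 ^ D = #N := by
    rw [← card_qpskVecs]
    exact Fintype.card_filter_piFinset_const_mul_card _ z (Fintype.mem_piFinset.mpr hw)
  have hbad : #(N.filter (¬P ·)) ≤ #(N.filter (· z = w)) := by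
    refine card_le_card fun S hS => ?_
    simp only [mem_filter] at hS ⊢
    exact ⟨hS.1, by_contra fun h => hS.2 (hP S (mem_qpskMatrices.mp hS.1) h)⟩
  have hN : 0 < #N :=
    card_pos.mpr ⟨fun _ => w, mem_qpskMatrices.mpr fun _ => hw⟩
  have hbad_le : (#(N.filter (¬P ·)) : ℝ) ≤ ((4 : ℝ) ^ D)⁻¹ * #N := by
    rw [inv_mul_eq_div, le_div_iff₀ (by positivity)]
    exact_mod_cast hrow ▸ Nat.mul_le_mul_right _ hbad
  have hsplit : (#(N.filter P) : ℝ) + #(N.filter (¬P ·)) = #N := by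
    exact_mod_cast card_filter_add_card_filter_not P
  rw [le_div_iff₀ (by exact_mod_cast hN)]
  linarith

theorem stmt3_general (U D T : ℕ) (hU : 0 < U)
    (S_T : Matrix (Fin U) (Fin T) ℂ) (hST : S_T.rank = U)
    (w_D : Fin D → ℂ) (hwD : ∀ k, w_D k ∈ QPSK)
    (W_T : Matrix (Fin 1) (Fin T) ℂ) (hWT : W_T = Matrix.of fun _ : Fin 1 => S_T ⟨0, hU⟩) :
    (∀ S_D : Matrix (Fin U) (Fin D) ℂ, (∀ i j, S_D i j ∈ QPSK) →
        w_D ≠ S_D ⟨0, hU⟩ →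
        EclipsedCE S_T S_D W_T (Matrix.of fun _ : Fin 1 => w_D)) ∧
    1 - ((4 : ℝ) ^ D)⁻¹ ≤
      probM U D (fun S_D => EclipsedCE S_T S_D W_T (Matrix.of fun _ : Fin 1 => w_D)) := by
  subst hWT
  have heclipsed : ∀ S_D : Matrix (Fin U) (Fin D) ℂ, (∀ i j, S_D i j ∈ QPSK) →
      w_D ≠ S_D ⟨0, hU⟩ → EclipsedCE S_T S_D _ (Matrix.of fun _ : Fin 1 => w_D) :=
    fun _ hSD hne => eclipsedCE_of_ne_row hST _ hwD hSD hne
  exact ⟨heclipsed, one_sub_inv_le_probM _ hwD _ fun S hS hne => heclipsed S hS (Ne.symm hne)⟩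

/-- If a single-antenna jammer transmits the first pilot row during the
pilot phase and some `w_D ∈ S^D` during the data phase, then it is eclipsed
(channel-estimation sense) whenever `w_Dᵀ` differs from the first row of `S_D`;
consequently, it eclipses with probability at least `1 − 4^{−D}`. -/
theorem stmt3 (U D T : ℕ) (hU : 0 < U) (hD : 0 < D) (hTU : U ≤ T)
    (S_T : Matrix (Fin U) (Fin T) ℂ) (hST : S_T.rank = U)
    (w_D : Fin D → ℂ) (hwD : ∀ k, w_D k ∈ QPSK)
    (W_T : Matrix (Fin 1) (Fin T) ℂ) (hWT : W_T = Matrix.of fun _ : Fin 1 => S_T ⟨0, hU⟩) :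
    (∀ S_D : Matrix (Fin U) (Fin D) ℂ, (∀ i j, S_D i j ∈ QPSK) →
        w_D ≠ S_D ⟨0, hU⟩ →
        EclipsedCE S_T S_D W_T (Matrix.of fun _ : Fin 1 => w_D)) ∧
    1 - ((4 : ℝ) ^ D)⁻¹ ≤
      probM U D (fun S_D => EclipsedCE S_T S_D W_T (Matrix.of fun _ : Fin 1 => w_D)) :=
  stmt3_general U D T hU S_T hST w_D hwD W_T hWT
end

section
/- Fix S_D ∈ S^{U×D} and w ∈ ℂ^D (single-antenna jammer, I = 1). The jammer is eclipsed (perfect-CSI sense), i.e., there exists S̃ ∈ S^{U×D} with S̃ ≠ S_D such that the (U+1)×D matrix obtained by stacking S_D − S̃ on top of wᵀ has rank at most 1, if and only if there exist an index u ∈ {1, …, U} and a vector s̃ ∈ S^D with s̃ ≠ s_u (where s_uᵀ denotes the u-th row of S_D) such that s̃ − s_u is collinear with w. -/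
/-
The rank of a matrix is the dimension of its row span. If `S̃ ≠ S_D`, some row `u` differs, and
`s̃_u − s_u` and `w` are (up to sign) rows of the stacked matrix, so their span has dimension at
most 1. Conversely, replacing only row `u` of `S_D` by `s̃` makes every row of the stacked matrix
`0`, `s_u − s̃` or `w`, all in the span of `s̃ − s_u` and `w`.
-/

open scoped BigOperators
open scoped Classical

theorem Matrix.rank_le_rank_of_row_mem_span {R m n o : Type*} [Field R] [Finite m] [Finite o]
    [Fintype n] {A : Matrix m n R} {B : Matrix o n R}
    (h : ∀ i, A i ∈ Submodule.span R (Set.range B)) : A.rank ≤ B.rank := by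
  rw [A.rank_eq_finrank_span_row, B.rank_eq_finrank_span_row]
  exact Submodule.finrank_mono (Submodule.span_le.2 (Set.range_subset_iff.2 h))

theorem Matrix.neg_row_mem_span_range {R m n : Type*} [Ring R] (A : Matrix m n R) (i : m) :
    -A i ∈ Submodule.span R (Set.range A) :=
  Submodule.neg_mem _ (Submodule.subset_span (Set.mem_range_self i))

section

variable {m : Type*} [Finite m] {D : ℕ} (S St : Matrix m (Fin D) ℂ) (w : Fin D → ℂ)

theorem collinear2_sub_row_of_rank_fromRows_le_one
    (h : (Matrix.fromRows (S - St) (Matrix.of fun _ : Fin 1 => w)).rank ≤ 1) (u : m) :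
    Collinear2 (St u - S u) w := by
  refine le_trans (Matrix.rank_le_rank_of_row_mem_span ?_) h
  intro i
  fin_cases i
  · convert Matrix.neg_row_mem_span_range _ (Sum.inl u) using 1
    ext j
    simp
  · exact Submodule.subset_span (Set.mem_range_self (Sum.inr 0))

theorem rank_fromRows_sub_updateRow_le_one [DecidableEq m] {u : m} {st : Fin D → ℂ}
    (h : Collinear2 (st - S u) w) :
    (Matrix.fromRows (S - S.updateRow u st) (Matrix.of fun _ : Fin 1 => w)).rank ≤ 1 := by
  refine le_trans (Matrix.rank_le_rank_of_row_mem_span ?_) h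
  rintro (i | i)
  · rcases eq_or_ne i u with rfl | hi
    · convert Matrix.neg_row_mem_span_range (Matrix.of ![st - S i, w]) 0 using 1
      ext j
      simp
    · convert Submodule.zero_mem _ using 1
      ext j
      simp [hi]
  · exact Submodule.subset_span (Set.mem_range_self 1)

end

theorem stmt9_general (U D : ℕ)
    (S_D : Matrix (Fin U) (Fin D) ℂ) (hSD : ∀ i j, S_D i j ∈ QPSK) (w : Fin D → ℂ) :
    EclipsedCSI S_D (Matrix.of fun _ : Fin 1 => w) ↔
      ∃ u : Fin U, ∃ st : Fin D → ℂ, (∀ k, st k ∈ QPSK) ∧ st ≠ S_D u ∧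
        Collinear2 (st - S_D u) w := by
  constructor
  · rintro ⟨St, hSt, hne, hrank⟩
    obtain ⟨u, hu⟩ := Function.ne_iff.mp hne
    exact ⟨u, St u, hSt u, hu, collinear2_sub_row_of_rank_fromRows_le_one S_D St w hrank u⟩
  · rintro ⟨u, st, hst, hne, hcol⟩
    refine ⟨S_D.updateRow u st, fun i j => ?_, fun h => hne (by rw [← h]; simp),
      rank_fromRows_sub_updateRow_le_one S_D w hcol⟩
    rcases eq_or_ne i u with rfl | hi
    · simpa using hst j
    · simpa [hi] using hSD i j

/-- A single-antenna jammer with transmit vector `w` is eclipsed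
(perfect-CSI sense) iff for some UE index `u` there is `s̃ ∈ S^D`, `s̃ ≠ s_u`,
with `s̃ − s_u` collinear with `w`. -/
theorem stmt9 (U D : ℕ) (hU : 0 < U) (hD : 0 < D)
    (S_D : Matrix (Fin U) (Fin D) ℂ) (hSD : ∀ i j, S_D i j ∈ QPSK) (w : Fin D → ℂ) :
    EclipsedCSI S_D (Matrix.of fun _ : Fin 1 => w) ↔
      ∃ u : Fin U, ∃ st : Fin D → ℂ, (∀ k, st k ∈ QPSK) ∧ st ≠ S_D u ∧
        Collinear2 (st - S_D u) w :=
  stmt9_general U D S_D hSD w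
end

section
/- Let m ≥ 2, let s ∈ S^m, and let w = √2·(1, 1, …, 1) ∈ ℂ^m. Then there exists s̃ ∈ S^m with s̃ ≠ s such that s̃ − s is collinear with w if and only if all entries of s have positive real part, or all entries have negative real part, or all entries have positive imaginary part, or all entries have negative imaginary part. -/
open scoped BigOperators
open scoped Classical

/-!
A difference `s̃ - s` collinear with the nonzero constant vector `w` is itself constant, so the
question is for which `s` some `d ≠ 0` has `s k + d ∈ S` for every `k`. Real and imaginary parts
of QPSK points are `±1/√2`, so a nonzero `d.re` must be `±√2` and flips the sign of every real
part; this forces all real parts of `s` to have the sign opposite to `d.re`. The same holds for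
imaginary parts, and conversely a common sign lets `d = ∓√2` or `d = ∓√2 i` work.
-/

theorem neg_of_abs_add_eq_abs {a t : ℝ} (ht : 0 < t) (h : |a + t| = |a|) : a < 0 := by
  rcases abs_eq_abs.1 h with h | h <;> linarith

theorem pos_of_abs_add_eq_abs {a t : ℝ} (ht : t < 0) (h : |a + t| = |a|) : 0 < a := by
  rcases abs_eq_abs.1 h with h | h <;> linarith

theorem abs_sub_eq_of_abs_eq {a c t : ℝ} (h : |a| = c) (ha : 0 < a) (ht : t = 2 * c) :
    |a - t| = c := by
  rw [abs_of_pos ha] at h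
  rw [ht, ← h, show a - 2 * a = -a by ring, abs_neg, abs_of_pos ha]

theorem abs_add_eq_of_abs_eq {a c t : ℝ} (h : |a| = c) (ha : a < 0) (ht : t = 2 * c) :
    |a + t| = c := by
  rw [abs_of_neg ha] at h
  rw [ht, ← h, show a + 2 * -a = -a by ring, abs_neg, abs_of_neg ha]

theorem sqrt_two_eq_two_mul_inv : √2 = 2 * (√2)⁻¹ := by
  rw [← div_eq_mul_inv, Real.div_sqrt]

theorem collinear2_const_iff {m : ℕ} {x : Fin m → ℂ} {w : ℂ} (hw : w ≠ 0) :
    Collinear2 x (fun _ => w) ↔ ∃ d, x = fun _ => d := by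
  constructor
  · intro h
    rcases isEmpty_or_nonempty (Fin m) with _ | ⟨⟨j₀⟩⟩
    · exact ⟨0, Subsingleton.elim _ _⟩
    refine ⟨x j₀, funext fun k => by_contra fun hk => ?_⟩
    have hdet : ((Matrix.of ![x, fun _ => w]).submatrix id ![k, j₀]).det ≠ 0 := by
      rw [Matrix.det_fin_two]
      simpa [sub_eq_zero, mul_comm] using fun h => hk (mul_right_cancel₀ hw h)
    have h2 := (Matrix.rank_of_det_ne_zero hdet).symm.le.trans (Matrix.rank_submatrix_le _ _ _)
    rw [Fintype.card_fin] at h2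
    exact absurd (h2.trans h) (by norm_num)
  · rintro ⟨d, rfl⟩
    have : Matrix.of ![fun _ : Fin m => d, fun _ => w] = Matrix.vecMulVec ![d, w] fun _ => 1 := by
      ext i j
      fin_cases i <;> simp [Matrix.vecMulVec_apply]
    rw [Collinear2, this]
    exact Matrix.rank_vecMulVec_le _ _

theorem exists_ne_sub_eq_const_iff {ι α : Type*} [Nonempty ι] [AddCommGroup α] (P : α → Prop)
    (s : ι → α) :
    (∃ t : ι → α, (∀ k, P (t k)) ∧ t ≠ s ∧ ∃ d, t - s = fun _ => d) ↔
      ∃ d ≠ 0, ∀ k, P (s k + d) := by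
  constructor
  · rintro ⟨t, ht, hts, d, hd⟩
    have ht_eq : ∀ k, t k = s k + d := fun k => by
      rw [← congrFun hd k, Pi.sub_apply, add_sub_cancel]
    refine ⟨d, fun h0 => hts (funext fun k => by simp [ht_eq, h0]), fun k => ht_eq k ▸ ht k⟩
  · rintro ⟨d, hd, hP⟩
    obtain ⟨k₀⟩ := ‹Nonempty ι›
    refine ⟨fun k => s k + d, hP, fun h => hd ?_, d, funext fun k => add_sub_cancel_left (s k) d⟩
    simpa using congrFun h k₀

theorem mem_QPSK_iff_s17 {z : ℂ} : z ∈ QPSK ↔ |z.re| = (√2)⁻¹ ∧ |z.im| = (√2)⁻¹ := by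
  have hc : 0 ≤ (√2)⁻¹ := by positivity
  simp only [abs_eq hc]
  constructor
  · simp only [QPSK, Finset.mem_insert, Finset.mem_singleton]
    rintro (rfl | rfl | rfl | rfl) <;> simp [neg_div, one_div]
  · rintro ⟨hre | hre, him | him⟩ <;> simp [QPSK, Complex.ext_iff, hre, him, neg_div, one_div]

theorem exists_add_mem_QPSK_iff {ι : Type*} {s : ι → ℂ} (hs : ∀ k, s k ∈ QPSK) :
    (∃ d ≠ 0, ∀ k, s k + d ∈ QPSK) ↔
      (∀ k, 0 < (s k).re) ∨ (∀ k, (s k).re < 0) ∨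
        (∀ k, 0 < (s k).im) ∨ (∀ k, (s k).im < 0) := by
  constructor
  · rintro ⟨d, hd, hsd⟩
    have hre : ∀ k, |(s k).re + d.re| = |(s k).re| := fun k => by
      rw [← Complex.add_re, (mem_QPSK_iff_s17.1 (hsd k)).1, (mem_QPSK_iff_s17.1 (hs k)).1]
    have him : ∀ k, |(s k).im + d.im| = |(s k).im| := fun k => by
      rw [← Complex.add_im, (mem_QPSK_iff_s17.1 (hsd k)).2, (mem_QPSK_iff_s17.1 (hs k)).2]
    rcases lt_trichotomy d.re 0 with hd_re | hd_re | hd_re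
    · exact .inl fun k => pos_of_abs_add_eq_abs hd_re (hre k)
    · have hd_im : d.im ≠ 0 := fun h => hd (Complex.ext hd_re h)
      rcases hd_im.lt_or_gt with hd_im | hd_im
      · exact .inr <| .inr <| .inl fun k => pos_of_abs_add_eq_abs hd_im (him k)
      · exact .inr <| .inr <| .inr fun k => neg_of_abs_add_eq_abs hd_im (him k)
    · exact .inr <| .inl fun k => neg_of_abs_add_eq_abs hd_re (hre k)
  · have hs' := fun k => mem_QPSK_iff_s17.1 (hs k)
    have hsqrt : (√2 : ℂ) ≠ 0 := by simp
    rintro (h | h | h | h)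
    · refine ⟨-√2, neg_ne_zero.2 hsqrt, fun k => ?_⟩
      simp only [mem_QPSK_iff_s17, ← sub_eq_add_neg, Complex.sub_re, Complex.sub_im,
        Complex.ofReal_re, Complex.ofReal_im, sub_zero]
      exact ⟨abs_sub_eq_of_abs_eq (hs' k).1 (h k) sqrt_two_eq_two_mul_inv, (hs' k).2⟩
    · refine ⟨√2, hsqrt, fun k => ?_⟩
      simp only [mem_QPSK_iff_s17, Complex.add_re, Complex.add_im,
        Complex.ofReal_re, Complex.ofReal_im, add_zero]
      exact ⟨abs_add_eq_of_abs_eq (hs' k).1 (h k) sqrt_two_eq_two_mul_inv, (hs' k).2⟩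
    · refine ⟨-√2 * Complex.I, by simp, fun k => ?_⟩
      simp only [mem_QPSK_iff_s17, neg_mul, ← sub_eq_add_neg, Complex.sub_re, Complex.sub_im,
        Complex.mul_I_re, Complex.mul_I_im, Complex.ofReal_re, Complex.ofReal_im, neg_zero, sub_zero]
      exact ⟨(hs' k).1, abs_sub_eq_of_abs_eq (hs' k).2 (h k) sqrt_two_eq_two_mul_inv⟩
    · refine ⟨√2 * Complex.I, by simp, fun k => ?_⟩
      simp only [mem_QPSK_iff_s17, Complex.add_re, Complex.add_im, Complex.mul_I_re, Complex.mul_I_im,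
        Complex.ofReal_re, Complex.ofReal_im, neg_zero, add_zero]
      exact ⟨(hs' k).1, abs_add_eq_of_abs_eq (hs' k).2 (h k) sqrt_two_eq_two_mul_inv⟩

/-- For `m ≥ 2`, `s ∈ S^m`, and `w = √2·(1,…,1)`, there exists
`s̃ ∈ S^m`, `s̃ ≠ s`, with `s̃ − s` collinear with `w` iff all entries of `s` have
positive real part, or all negative real part, or all positive imaginary part, or all
negative imaginary part. -/
theorem stmt17 (m : ℕ) (hm : 2 ≤ m) (s : Fin m → ℂ) (hs : ∀ k, s k ∈ QPSK) :
    (∃ st : Fin m → ℂ, (∀ k, st k ∈ QPSK) ∧ st ≠ s ∧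
        Collinear2 (st - s) (fun _ => ((Real.sqrt 2 : ℝ) : ℂ))) ↔
      ((∀ k, 0 < (s k).re) ∨ (∀ k, (s k).re < 0) ∨
        (∀ k, 0 < (s k).im) ∨ (∀ k, (s k).im < 0)) := by
  have : Nonempty (Fin m) := ⟨⟨0, by omega⟩⟩
  have hw : ((√2 : ℝ) : ℂ) ≠ 0 := by simp
  simp only [collinear2_const_iff hw]
  exact (exists_ne_sub_eq_const_iff (· ∈ QPSK) s).trans (exists_add_mem_QPSK_iff hs)
end

section
/- Let U, D ≥ 1, let α ∈ ℂ with α ≠ 0, and let w ∈ (Ŵ_α)^D be a vector all of whose entries lie in Ŵ_α = {0, α, iα, −α, −iα}, with m = ‖w‖₀ ≥ 1 nonzero entries. If S_D is drawn uniformly at random from S^{U×D}, then the probability that the single-antenna jammer (I = 1) with data-phase transmit vector w is eclipsed (perfect-CSI sense) equals exactly 1 − (1 − (2^m − 1)/4^{m−1})^U. -/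
open scoped BigOperators
open scoped Classical

/-- `Ŵ_α = {0, α, iα, −α, −iα}`. -/
def What (a : ℂ) : Set ℂ := {0, a, Complex.I * a, -a, -(Complex.I * a)}

/-! Scaling by `√2` identifies QPSK with `{±1 ± i} ⊂ ℤ[i]` and writes `w = α • υ` with
`υ k ∈ {0, ±1, ±i}`. A row `s` is eclipsing iff `s - c • υ` is again a QPSK row for some
`c ≠ 0`; at a coordinate with `υ k ≠ 0` this forces `√2 c` to be a difference of two QPSK
points rotated by a unit, i.e. one of `±2, ±2i, ±2 ± 2i`, and a diagonal shift `±2 ± 2i` can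
always be traded for an axis shift. For an axis shift each of the `m` coordinates in the support
of `υ` admits 2 of the 4 symbols; opposite axis shifts are never simultaneously admissible,
perpendicular ones share exactly one symbol per coordinate. Inclusion–exclusion gives
`4 (2^m - 1) / 4^m` eclipsing rows, and the `U` rows of `S_D` are independent. -/

open Finset

theorem Matrix.rank_le_one_iff_forall_mem_span {ι n K : Type*} [Fintype ι] [Fintype n] [Field K]
    (M : Matrix ι n K) {i₀ : ι} (h : M.row i₀ ≠ 0) :
    M.rank ≤ 1 ↔ ∀ i, M.row i ∈ K ∙ M.row i₀ := by
  have hle : K ∙ M.row i₀ ≤ Submodule.span K (Set.range M.row) :=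
    Submodule.span_mono (Set.singleton_subset_iff.2 ⟨i₀, rfl⟩)
  have hone : Module.finrank K (K ∙ M.row i₀) = 1 := finrank_span_singleton h
  have hrows : (∀ i, M.row i ∈ K ∙ M.row i₀) ↔
      Submodule.span K (Set.range M.row) ≤ K ∙ M.row i₀ := by
    simp only [Submodule.span_le, Set.range_subset_iff, SetLike.mem_coe]
  rw [M.rank_eq_finrank_span_row, hrows]
  constructor
  · intro hrank
    exact (Submodule.eq_of_le_of_finrank_le hle (hrank.trans hone.ge)).ge
  · intro hspan
    exact (Submodule.finrank_mono hspan).trans hone.le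

theorem Finset.card_filter_exists_row_add {α : Type*} [DecidableEq α] (U : ℕ) (V : Finset α)
    (P : α → Prop) [DecidablePred P] :
    #{S ∈ Fintype.piFinset (fun _ : Fin U => V) | ∃ u, P (S u)} + #{s ∈ V | ¬P s} ^ U =
      #V ^ U := by
  have hbad : {S ∈ Fintype.piFinset (fun _ : Fin U => V) | ¬∃ u, P (S u)} =
      Fintype.piFinset fun _ : Fin U => {s ∈ V | ¬P s} := by
    ext S
    simp only [mem_filter, Fintype.mem_piFinset, not_exists, forall_and]
  have hsplit := card_filter_add_card_filter_not (s := Fintype.piFinset fun _ : Fin U => V)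
    (p := fun S => ∃ u, P (S u))
  simpa only [hbad, Fintype.card_piFinset, prod_const, card_univ, Fintype.card_fin] using hsplit

theorem Finset.card_union_four_add {α : Type*} [DecidableEq α] {A B C E : Finset α} {x y : ℕ}
    (hA : #A = x) (hB : #B = x) (hC : #C = x) (hE : #E = x)
    (hAB : Disjoint A B) (hCE : Disjoint C E)
    (hAC : #(A ∩ C) = y) (hAE : #(A ∩ E) = y) (hBC : #(B ∩ C) = y) (hBE : #(B ∩ E) = y) :
    #(A ∪ B ∪ (C ∪ E)) + 4 * y = 4 * x := by
  have hinter : (A ∪ B) ∩ (C ∪ E) = (A ∩ C ∪ A ∩ E) ∪ (B ∩ C ∪ B ∩ E) := by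
    rw [union_inter_distrib_right, inter_union_distrib_left, inter_union_distrib_left]
  have hA' : #(A ∩ C ∪ A ∩ E) = 2 * y := by
    rw [card_union_of_disjoint (hCE.mono inter_subset_right inter_subset_right), hAC, hAE]; ring
  have hB' : #(B ∩ C ∪ B ∩ E) = 2 * y := by
    rw [card_union_of_disjoint (hCE.mono inter_subset_right inter_subset_right), hBC, hBE]; ring
  have hAB' : Disjoint (A ∩ C ∪ A ∩ E) (B ∩ C ∪ B ∩ E) :=
    hAB.mono (union_subset inter_subset_left inter_subset_left)
      (union_subset inter_subset_left inter_subset_left)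
  have hsplit := card_union_add_card_inter (A ∪ B) (C ∪ E)
  rw [hinter, card_union_of_disjoint hAB', hA', hB', card_union_of_disjoint hAB,
    card_union_of_disjoint hCE] at hsplit
  omega

theorem Fintype.card_piFinset_of_card_eq_ite {D : ℕ} {β R : Type*} [DecidableEq β] [Zero R]
    [DecidableEq R] (F : Fin D → Finset β) (υ : Fin D → R) (b c : ℕ)
    (hF : ∀ k, #(F k) = if υ k = 0 then b else c) :
    #(Fintype.piFinset F) = c ^ #{k | υ k ≠ 0} * b ^ #{k | υ k = 0} := by
  rw [Fintype.card_piFinset, Finset.prod_congr rfl fun k _ => hF k, Finset.prod_ite,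
    Finset.prod_const, Finset.prod_const, mul_comm]

namespace QPSKEclipse

open GaussianInt

local notation "ℤ[i]" => GaussianInt

def qpskGauss : Finset ℤ[i] := {⟨1, 1⟩, ⟨1, -1⟩, ⟨-1, 1⟩, ⟨-1, -1⟩}

def unitsOrZero : Finset ℤ[i] := {0, ⟨1, 0⟩, ⟨0, 1⟩, ⟨-1, 0⟩, ⟨0, -1⟩}

def axisShifts : Finset ℤ[i] := {⟨2, 0⟩, ⟨0, 2⟩, ⟨-2, 0⟩, ⟨0, -2⟩}

def qpskDiffs : Finset ℤ[i] :=
  {⟨2, 0⟩, ⟨0, 2⟩, ⟨-2, 0⟩, ⟨0, -2⟩, ⟨2, 2⟩, ⟨2, -2⟩, ⟨-2, 2⟩, ⟨-2, -2⟩}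

def shiftSet (ζ υ : ℤ[i]) : Finset ℤ[i] := {σ ∈ qpskGauss | σ - ζ * υ ∈ qpskGauss}

theorem mul_star_eq_one : ∀ υ ∈ unitsOrZero, υ ≠ 0 → υ * star υ = 1 := by decide

theorem sub_mul_star_mem_qpskDiffs : ∀ σ ∈ qpskGauss, ∀ τ ∈ qpskGauss, σ ≠ τ →
    ∀ υ ∈ unitsOrZero, υ ≠ 0 → (σ - τ) * star υ ∈ qpskDiffs := by decide

theorem exists_axisShift : ∀ ζ ∈ qpskDiffs, ∃ ζ' ∈ axisShifts,
    ∀ σ ∈ qpskGauss, ∀ υ ∈ unitsOrZero, σ - ζ * υ ∈ qpskGauss → σ - ζ' * υ ∈ qpskGauss := by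
  decide

theorem card_shiftSet : ∀ ζ ∈ axisShifts, ∀ υ ∈ unitsOrZero,
    #(shiftSet ζ υ) = if υ = 0 then 4 else 2 := by decide

theorem card_shiftSet_inter_neg : ∀ ζ ∈ axisShifts, ∀ υ ∈ unitsOrZero,
    #(shiftSet ζ υ ∩ shiftSet (-ζ) υ) = if υ = 0 then 4 else 0 := by decide

theorem card_shiftSet_inter_mul_I : ∀ ζ ∈ axisShifts, ∀ υ ∈ unitsOrZero,
    #(shiftSet ζ υ ∩ shiftSet (⟨0, 1⟩ * ζ) υ) = if υ = 0 then 4 else 1 := by decide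

noncomputable def ofGauss (x : ℤ[i]) : ℂ := (x : ℂ) / (Real.sqrt 2 : ℂ)

theorem sqrt_two_ne_zero : (Real.sqrt 2 : ℂ) ≠ 0 := by
  exact_mod_cast (Real.sqrt_pos.2 two_pos).ne'

theorem ofGauss_injective : Function.Injective ofGauss := fun _ _ h =>
  toComplex_injective ((div_left_inj' sqrt_two_ne_zero).1 h)

theorem ofGauss_sub (x y : ℤ[i]) : ofGauss (x - y) = ofGauss x - ofGauss y := by
  rw [ofGauss, ofGauss, ofGauss, toComplex_sub, sub_div]

theorem ofGauss_mul (x y : ℤ[i]) : ofGauss (x * y) = ofGauss x * y := by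
  rw [ofGauss, ofGauss, toComplex_mul, div_mul_eq_mul_div]

theorem ofGauss_eq_zero {x : ℤ[i]} : ofGauss x = 0 ↔ x = 0 := by
  simp [ofGauss]

theorem QPSK_eq_image : QPSK = qpskGauss.image ofGauss := by
  simp only [QPSK, qpskGauss, image_insert, image_singleton, ofGauss, toComplex_def']
  push_cast
  ring_nf

theorem ofGauss_mem_QPSK {x : ℤ[i]} : ofGauss x ∈ QPSK ↔ x ∈ qpskGauss := by
  rw [QPSK_eq_image, ofGauss_injective.mem_finset_image]

theorem mem_QPSK {z : ℂ} : z ∈ QPSK ↔ ∃ x ∈ qpskGauss, ofGauss x = z := by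
  rw [QPSK_eq_image, mem_image]

theorem card_QPSK : #QPSK = 4 := by
  rw [QPSK_eq_image, card_image_of_injective _ ofGauss_injective]
  rfl

theorem qpskVecs_eq_image (D : ℕ) :
    qpskVecs D = (Fintype.piFinset fun _ : Fin D => qpskGauss).image (ofGauss ∘ ·) := by
  rw [qpskVecs, QPSK_eq_image, Fintype.piFinset_image]
  rfl

def IsEclipsingRow {D : ℕ} (w s : Fin D → ℂ) : Prop :=
  ∃ st : Fin D → ℂ, (∀ k, st k ∈ QPSK) ∧ st ≠ s ∧ s - st ∈ ℂ ∙ w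

def IsAxisShiftable {D : ℕ} (υ σ : Fin D → ℤ[i]) : Prop :=
  ∃ ζ ∈ axisShifts, ∀ k, σ k - ζ * υ k ∈ qpskGauss

section Rows

variable {D : ℕ}

theorem isEclipsingRow_smul {a : ℂ} (ha : a ≠ 0) (w s : Fin D → ℂ) :
    IsEclipsingRow (a • w) s ↔ IsEclipsingRow w s := by
  simp only [IsEclipsingRow, Submodule.span_singleton_smul_eq (IsUnit.mk0 a ha)]

theorem IsEclipsingRow.isAxisShiftable {υ σ : Fin D → ℤ[i]} (hυ : ∀ k, υ k ∈ unitsOrZero)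
    (hσ : ∀ k, σ k ∈ qpskGauss) (h : IsEclipsingRow (fun k => (υ k : ℂ)) (ofGauss ∘ σ)) :
    IsAxisShiftable υ σ := by
  obtain ⟨st, hst, hne, hline⟩ := h
  choose τ hτ hτst using fun k => mem_QPSK.1 (hst k)
  obtain ⟨c, hc⟩ := Submodule.mem_span_singleton.1 hline
  have hdiff : ∀ k, ofGauss (σ k - τ k) = c * υ k := fun k => by
    rw [ofGauss_sub, hτst]
    exact (congrFun hc k).symm
  obtain ⟨k₀, hk₀⟩ : ∃ k, σ k ≠ τ k := by
    by_contra! hστ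
    exact hne (funext fun k => by rw [← hτst, ← hστ k]; rfl)
  have hυk₀ : υ k₀ ≠ 0 := by
    intro h0
    have := hdiff k₀
    rw [h0, toComplex_zero, mul_zero, ofGauss_eq_zero, sub_eq_zero] at this
    exact hk₀ this
  -- `c` is itself a scaled Gaussian integer, obtained by undoing the unit `υ k₀`
  set ζ := (σ k₀ - τ k₀) * star (υ k₀)
  have hζ : ofGauss ζ = c := by
    rw [ofGauss_mul, hdiff, mul_assoc, ← toComplex_mul, mul_star_eq_one _ (hυ k₀) hυk₀,
      toComplex_one, mul_one]
  have hshift : ∀ k, σ k - ζ * υ k = τ k := fun k => ofGauss_injective <| by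
    rw [ofGauss_sub, ofGauss_mul, hζ, ← hdiff, ofGauss_sub, sub_sub_cancel]
  obtain ⟨ζ', hζ', hax⟩ := exists_axisShift ζ
    (sub_mul_star_mem_qpskDiffs _ (hσ k₀) _ (hτ k₀) hk₀ _ (hυ k₀) hυk₀)
  exact ⟨ζ', hζ', fun k => hax _ (hσ k) _ (hυ k) ((hshift k).symm ▸ hτ k)⟩

theorem IsAxisShiftable.isEclipsingRow {υ σ : Fin D → ℤ[i]} (hυ : υ ≠ 0)
    (h : IsAxisShiftable υ σ) : IsEclipsingRow (fun k => (υ k : ℂ)) (ofGauss ∘ σ) := by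
  obtain ⟨ζ, hζ, hshift⟩ := h
  obtain ⟨k₀, hk₀⟩ := Function.ne_iff.1 hυ
  have hζ0 : ζ ≠ 0 := by rintro rfl; revert hζ; decide
  refine ⟨fun k => ofGauss (σ k - ζ * υ k), fun k => ofGauss_mem_QPSK.2 (hshift k), ?_, ?_⟩
  · intro heq
    have := ofGauss_injective (congrFun heq k₀)
    rw [sub_eq_self] at this
    exact mul_ne_zero hζ0 hk₀ this
  · refine Submodule.mem_span_singleton.2 ⟨ofGauss ζ, funext fun k => ?_⟩
    simp only [Pi.smul_apply, smul_eq_mul, Pi.sub_apply, Function.comp_apply, ofGauss_sub,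
      ofGauss_mul, sub_sub_cancel]

end Rows

theorem eclipsedCSI_iff {U D : ℕ} {w : Fin D → ℂ} (hw : w ≠ 0) {S : Matrix (Fin U) (Fin D) ℂ}
    (hS : ∀ u k, S u k ∈ QPSK) :
    EclipsedCSI S (Matrix.of fun _ : Fin 1 => w) ↔ ∃ u, IsEclipsingRow w (S u) := by
  have hrank (St : Matrix (Fin U) (Fin D) ℂ) :
      (Matrix.fromRows (S - St) (Matrix.of fun _ : Fin 1 => w)).rank ≤ 1 ↔
        ∀ u, S u - St u ∈ ℂ ∙ w := by
    rw [Matrix.rank_le_one_iff_forall_mem_span (i₀ := Sum.inr 0) _ (by exact hw), Sum.forall]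
    simp only [Matrix.row, Fin.forall_fin_one]
    exact and_iff_left (Submodule.mem_span_singleton_self w)
  simp only [EclipsedCSI, hrank]
  constructor
  · rintro ⟨St, hSt, hne, hrows⟩
    obtain ⟨u, hu⟩ := Function.ne_iff.1 hne
    exact ⟨u, St u, hSt u, hu, hrows u⟩
  · rintro ⟨u, st, hst, hne, hline⟩
    refine ⟨S.updateRow u st, fun v k => ?_, fun h => hne ?_, fun v => ?_⟩
    · rcases eq_or_ne v u with rfl | hv
      · simpa only [Matrix.updateRow_self] using hst k
      · simpa only [Matrix.updateRow_ne hv] using hS v k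
    · simpa only [Matrix.updateRow_self] using congrFun h u
    · rcases eq_or_ne v u with rfl | hv
      · simpa only [Matrix.updateRow_self] using hline
      · simp only [Matrix.updateRow_ne hv, sub_self, Submodule.zero_mem]

section Counting

variable {D : ℕ}

theorem card_filter_ne_zero_ne_zero {R : Type*} [Zero R] [DecidableEq R] {υ : Fin D → R}
    (hυ : υ ≠ 0) : #{k | υ k ≠ 0} ≠ 0 := by
  obtain ⟨k, hk⟩ := Function.ne_iff.1 hυ
  exact card_ne_zero.2 ⟨k, mem_filter.2 ⟨mem_univ k, hk⟩⟩

def shiftBox (υ : Fin D → ℤ[i]) (ζ : ℤ[i]) : Finset (Fin D → ℤ[i]) :=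
  Fintype.piFinset fun k => shiftSet ζ (υ k)

theorem filter_isAxisShiftable_eq (υ : Fin D → ℤ[i]) :
    {σ ∈ Fintype.piFinset (fun _ : Fin D => qpskGauss) | IsAxisShiftable υ σ} =
      shiftBox υ ⟨2, 0⟩ ∪ shiftBox υ ⟨-2, 0⟩ ∪ (shiftBox υ ⟨0, 2⟩ ∪ shiftBox υ ⟨0, -2⟩) := by
  ext σ
  simp only [mem_filter, Fintype.mem_piFinset, IsAxisShiftable, axisShifts, shiftBox, shiftSet,
    mem_union, mem_insert, mem_singleton, exists_eq_or_imp, exists_eq_left, forall_and]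
  tauto

theorem card_shiftBox_inter {υ : Fin D → ℤ[i]} (hυ : ∀ k, υ k ∈ unitsOrZero) {ζ ζ' : ℤ[i]}
    {c : ℕ} (h : ∀ υ ∈ unitsOrZero, #(shiftSet ζ υ ∩ shiftSet ζ' υ) = if υ = 0 then 4 else c) :
    #(shiftBox υ ζ ∩ shiftBox υ ζ') = c ^ #{k | υ k ≠ 0} * 4 ^ #{k | υ k = 0} := by
  rw [shiftBox, shiftBox, ← Fintype.piFinset_inter]
  exact Fintype.card_piFinset_of_card_eq_ite _ _ _ _ fun k => h _ (hυ k)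

theorem card_filter_isAxisShiftable_add {υ : Fin D → ℤ[i]} (hυ : ∀ k, υ k ∈ unitsOrZero)
    (hυ0 : υ ≠ 0) :
    #{σ ∈ Fintype.piFinset (fun _ : Fin D => qpskGauss) | IsAxisShiftable υ σ} +
        4 * 4 ^ #{k | υ k = 0} = 4 * (2 ^ #{k | υ k ≠ 0} * 4 ^ #{k | υ k = 0}) := by
  have hbox (ζ) (hζ : ζ ∈ axisShifts) :
      #(shiftBox υ ζ) = 2 ^ #{k | υ k ≠ 0} * 4 ^ #{k | υ k = 0} := by
    have := card_shiftBox_inter hυ fun υ hυ => by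
      rw [inter_self]; exact card_shiftSet ζ hζ υ hυ
    rwa [inter_self] at this
  have hopp (ζ) (hζ : ζ ∈ axisShifts) (ζ') (hζ' : ζ' = -ζ) :
      Disjoint (shiftBox υ ζ) (shiftBox υ ζ') := by
    have := card_shiftBox_inter hυ (hζ' ▸ card_shiftSet_inter_neg ζ hζ)
    rwa [zero_pow (card_filter_ne_zero_ne_zero hυ0), zero_mul, card_eq_zero,
      ← disjoint_iff_inter_eq_empty] at this
  have hperp (ζ) (hζ : ζ ∈ axisShifts) (ζ') (hζ' : ζ' = ⟨0, 1⟩ * ζ) :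
      #(shiftBox υ ζ ∩ shiftBox υ ζ') = 4 ^ #{k | υ k = 0} := by
    have := card_shiftBox_inter hυ (hζ' ▸ card_shiftSet_inter_mul_I ζ hζ)
    rwa [one_pow, one_mul] at this
  rw [filter_isAxisShiftable_eq]
  refine card_union_four_add (hbox _ (by decide)) (hbox _ (by decide)) (hbox _ (by decide))
    (hbox _ (by decide)) (hopp _ (by decide) _ (by decide)) (hopp _ (by decide) _ (by decide))
    (hperp _ (by decide) _ (by decide)) ?_ ?_ (hperp _ (by decide) _ (by decide))
  · rw [inter_comm]; exact hperp _ (by decide) _ (by decide)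
  · rw [inter_comm]; exact hperp _ (by decide) _ (by decide)

theorem card_qpskVecs_filter_not_isEclipsingRow_div {υ : Fin D → ℤ[i]}
    (hυ : ∀ k, υ k ∈ unitsOrZero) (hυ0 : υ ≠ 0) :
    (#{s ∈ qpskVecs D | ¬IsEclipsingRow (fun k => (υ k : ℂ)) s} : ℝ) / #(qpskVecs D) =
      1 - (2 ^ #{k | υ k ≠ 0} - 1) / 4 ^ (#{k | υ k ≠ 0} - 1) := by
  have hgood : #{s ∈ qpskVecs D | IsEclipsingRow (fun k => (υ k : ℂ)) s} =
      #{σ ∈ Fintype.piFinset (fun _ : Fin D => qpskGauss) | IsAxisShiftable υ σ} := by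
    rw [qpskVecs_eq_image, filter_image,
      card_image_of_injective _ ofGauss_injective.comp_left]
    refine congrArg card (filter_congr fun σ hσ => ?_)
    have hσ := Fintype.mem_piFinset.1 hσ
    exact ⟨fun h => h.isAxisShiftable hυ hσ, fun h => h.isEclipsingRow hυ0⟩
  have htotal : #(qpskVecs D) = 4 ^ #{k | υ k ≠ 0} * 4 ^ #{k | υ k = 0} :=
    Fintype.card_piFinset_of_card_eq_ite _ υ 4 4 fun _ => by rw [card_QPSK, ite_self]
  have hsplit := card_filter_add_card_filter_not (s := qpskVecs D)
    (p := fun s => IsEclipsingRow (fun k => (υ k : ℂ)) s)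
  have hcount := card_filter_isAxisShiftable_add hυ hυ0
  rw [hgood, htotal] at hsplit
  obtain ⟨m', hm'⟩ := Nat.exists_eq_add_one_of_ne_zero (card_filter_ne_zero_ne_zero hυ0)
  rw [htotal, hm', Nat.add_sub_cancel, div_eq_iff (by positivity)]
  rw [hm'] at hsplit hcount
  have hs := congrArg (Nat.cast (R := ℝ)) hsplit
  have hc := congrArg (Nat.cast (R := ℝ)) hcount
  push_cast at hs hc ⊢
  field_simp
  linear_combination (4 : ℝ) ^ m' * (hs - hc)

end Counting

theorem probM_eq_one_sub_pow {U D : ℕ} {P : Matrix (Fin U) (Fin D) ℂ → Prop}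
    {Q : (Fin D → ℂ) → Prop} (hPQ : ∀ S ∈ qpskMatrices U D, P S ↔ ∃ u, Q (S u)) :
    probM U D P = 1 - ((#{s ∈ qpskVecs D | ¬Q s} : ℝ) / #(qpskVecs D)) ^ U := by
  have hcard : #(qpskMatrices U D) = #(qpskVecs D) ^ U := by
    change #(Fintype.piFinset fun _ : Fin U => qpskVecs D) = _
    rw [Fintype.card_piFinset, prod_const, card_univ, Fintype.card_fin]
  have hV : (#(qpskVecs D) : ℝ) ^ U ≠ 0 := by
    simp [qpskVecs, Fintype.card_piFinset, card_QPSK]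
  rw [probM, filter_congr hPQ, hcard, Nat.cast_pow, div_pow, eq_sub_iff_add_eq,
    ← add_div, div_eq_one_iff_eq hV]
  exact_mod_cast card_filter_exists_row_add U (qpskVecs D) Q

theorem exists_mem_unitsOrZero_of_mem_What {a z : ℂ} (hz : z ∈ What a) :
    ∃ υ ∈ unitsOrZero, z = a * υ := by
  simp only [What, Set.mem_insert_iff, Set.mem_singleton_iff] at hz
  rcases hz with rfl | rfl | rfl | rfl | rfl
  · exact ⟨0, by decide, by simp⟩
  · exact ⟨⟨1, 0⟩, by decide, by simp [toComplex_def']⟩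
  · exact ⟨⟨0, 1⟩, by decide, by simp [toComplex_def', mul_comm]⟩
  · exact ⟨⟨-1, 0⟩, by decide, by simp [toComplex_def']⟩
  · exact ⟨⟨0, -1⟩, by decide, by simp [toComplex_def', mul_comm]⟩

theorem exists_eq_smul_of_forall_mem_What {D : ℕ} {a : ℂ} {w : Fin D → ℂ}
    (hw : ∀ k, w k ∈ What a) :
    ∃ υ : Fin D → ℤ[i], (∀ k, υ k ∈ unitsOrZero) ∧ w = a • fun k => (υ k : ℂ) := by
  choose υ hυ hwυ using fun k => exists_mem_unitsOrZero_of_mem_What (hw k)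
  exact ⟨υ, hυ, funext hwυ⟩

theorem zeroNorm_smul_toComplex {D : ℕ} {a : ℂ} (ha : a ≠ 0) (υ : Fin D → ℤ[i]) :
    zeroNorm (a • fun k => (υ k : ℂ)) = #{k | υ k ≠ 0} := by
  simp only [zeroNorm, Pi.smul_apply, smul_eq_mul, ne_eq, mul_eq_zero, ha, false_or,
    toComplex_eq_zero]

end QPSKEclipse

open QPSKEclipse GaussianInt

theorem stmt19_general (U D : ℕ) (a : ℂ) (ha : a ≠ 0)
    (w : Fin D → ℂ) (hw : ∀ k, w k ∈ What a) (hm : 1 ≤ zeroNorm w) :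
    probM U D (fun S_D => EclipsedCSI S_D (Matrix.of fun _ : Fin 1 => w)) =
      1 - (1 - ((2 : ℝ) ^ (zeroNorm w) - 1) / (4 : ℝ) ^ (zeroNorm w - 1)) ^ U := by
  obtain ⟨υ, hυ, rfl⟩ := exists_eq_smul_of_forall_mem_What hw
  rw [zeroNorm_smul_toComplex ha] at hm ⊢
  have hυ0 : υ ≠ 0 := fun h => by simp [h] at hm
  have hw0 : (a • fun k => (υ k : ℂ)) ≠ 0 :=
    smul_ne_zero ha fun h => hυ0 (funext fun k => toComplex_eq_zero.1 (congrFun h k))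
  rw [probM_eq_one_sub_pow fun S hS => eclipsedCSI_iff hw0 fun u k =>
      Fintype.mem_piFinset.1 (Fintype.mem_piFinset.1 hS u) k]
  simp only [isEclipsingRow_smul ha]
  rw [card_qpskVecs_filter_not_isEclipsingRow_div hυ hυ0]

/-- For a single-antenna jammer whose transmit vector `w` has all entries
in `Ŵ_α` (`α ≠ 0`) and `m = ‖w‖₀ ≥ 1` nonzero entries, with `S_D` uniform on
`S^{U×D}`, the probability of eclipsing (perfect-CSI sense) equals exactly
`1 − (1 − (2^m − 1)/4^{m−1})^U`. -/
theorem stmt19 (U D : ℕ) (hU : 0 < U) (hD : 0 < D) (a : ℂ) (ha : a ≠ 0)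
    (w : Fin D → ℂ) (hw : ∀ k, w k ∈ What a) (hm : 1 ≤ zeroNorm w) :
    probM U D (fun S_D => EclipsedCSI S_D (Matrix.of fun _ : Fin 1 => w)) =
      1 - (1 - ((2 : ℝ) ^ (zeroNorm w) - 1) / (4 : ℝ) ^ (zeroNorm w - 1)) ^ U :=
  stmt19_general U D a ha w hw hm
end
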